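/- arXiv:1812.08397 — 5 statements merged into one kernel-verified Lean document; each statement's English description precedes it below -/
import Mathlib

section
/- Let x, y be two elements of (L^0)^n. Then there exist sets A, B ∈ F such that: (1) A ∩ B = ∅ and A ∪ B = Ω; (2) whenever ξ, η ∈ L^0 satisfy ξx + ηy = θ, one has Ĩ_A ξ = 0 and Ĩ_A η = 0; (3) if x and y are L^0-independent then P(B) = 0, and if x and y are not L^0-independent then P(B) > 0 and there exist ξ, η ∈ L^0 with |ξ| + |η| ≠ 0 almost everywhere on B and ξx + ηy = θ. -/
/-!
Statements from "The fundamental theorem of affine geometry in `(L⁰)ⁿ`" (Wu–Long).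

`L⁰`, the algebra of equivalence classes (under `P`-a.e. equality) of real valued
random variables on a probability space `(Ω, F, P)`, is modeled as `Ω →ₘ[P] ℝ`,
and `(L⁰)ⁿ` as `Fin n → (Ω →ₘ[P] ℝ)` with the pointwise `L⁰`-module structure.
-/

open MeasureTheory

noncomputable section

variable {Ω : Type*} [MeasurableSpace Ω] {P : Measure Ω}

/-- `L⁰ = Ω →ₘ[P] ℝ` is a commutative ring under the pointwise a.e. operations. -/
instance : CommRing (Ω →ₘ[P] ℝ) :=
  { (inferInstance : AddCommGroup (Ω →ₘ[P] ℝ)),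
    (inferInstance : CommMonoid (Ω →ₘ[P] ℝ)) with
    left_distrib := fun a b c => AEEqFun.toGerm_injective <| by
      simp only [AEEqFun.mul_toGerm, AEEqFun.add_toGerm, mul_add]
    right_distrib := fun a b c => AEEqFun.toGerm_injective <| by
      simp only [AEEqFun.mul_toGerm, AEEqFun.add_toGerm, add_mul]
    zero_mul := fun a => AEEqFun.toGerm_injective <| by
      simp only [AEEqFun.mul_toGerm, AEEqFun.zero_toGerm, zero_mul]
    mul_zero := fun a => AEEqFun.toGerm_injective <| by
      simp only [AEEqFun.mul_toGerm, AEEqFun.zero_toGerm, mul_zero] }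

/-- `Ĩ_A` : the equivalence class of the indicator function of a measurable set `A`. -/
def ind (P : Measure Ω) {A : Set Ω} (hA : MeasurableSet A) : Ω →ₘ[P] ℝ :=
  AEEqFun.mk (A.indicator fun _ => (1 : ℝ)) (aestronglyMeasurable_const.indicator hA)

/-!
Let `B` be the set where all `2 × 2` minors `x i ω * y j ω - x j ω * y i ω` of representatives
of `x` and `y` vanish. Off `B` some minor is nonzero, and it annihilates the coefficients of any
pointwise relation `ξ ω • x ω + η ω • y ω = 0`. On `B` the vectors are parallel, which gives the
measurable nontrivial relation `(y ω ⬝ᵥ x ω, -(x ω ⬝ᵥ x ω))`, or `(1, 0)` where `x ω = 0`.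
Hence `A = Bᶜ` works, and `P B = 0` exactly when `x` and `y` are `L⁰`-independent.
-/

section Minors

variable {ι : Type*}

def MinorsVanish (u v : ι → ℝ) : Prop := ∀ i j, u i * v j = u j * v i

theorem isClosed_setOf_minorsVanish :
    IsClosed {p : (ι → ℝ) × (ι → ℝ) | MinorsVanish p.1 p.2} := by
  simp only [MinorsVanish, Set.ofPred_forall]
  exact isClosed_iInter fun i => isClosed_iInter fun j => isClosed_eq (by fun_prop) (by fun_prop)

theorem MinorsVanish.of_smul_add_smul_eq_zero {a b : ℝ} {u v : ι → ℝ}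
    (h : a • u + b • v = 0) (hab : (a, b) ≠ 0) : MinorsVanish u v := by
  intro i j
  have hi := congrFun h i
  have hj := congrFun h j
  simp only [Pi.add_apply, Pi.smul_apply, smul_eq_mul, Pi.zero_apply] at hi hj
  by_cases ha : a = 0
  · have hb : b ≠ 0 := fun hb => hab (by simp [ha, hb])
    have : b * (u i * v j - u j * v i) = 0 := by linear_combination u i * hj - u j * hi
    exact sub_eq_zero.mp ((mul_eq_zero.mp this).resolve_left hb)
  · have : a * (u i * v j - u j * v i) = 0 := by linear_combination v j * hi - v i * hj
    exact sub_eq_zero.mp ((mul_eq_zero.mp this).resolve_left ha)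

variable [Fintype ι]

/-- If `v` is parallel to `u ≠ 0`, then `(v ⬝ᵥ u) • u = (u ⬝ᵥ u) • v`. -/
def relationCoeffs (u v : ι → ℝ) : ℝ × ℝ :=
  open Classical in
  if MinorsVanish u v then if u = 0 then (1, 0) else (v ⬝ᵥ u, -(u ⬝ᵥ u)) else 0

theorem measurable_relationCoeffs :
    Measurable fun p : (ι → ℝ) × (ι → ℝ) => relationCoeffs p.1 p.2 := by
  refine Measurable.ite isClosed_setOf_minorsVanish.measurableSet
    (Measurable.ite (isClosed_eq continuous_fst continuous_const).measurableSet
      measurable_const (by fun_prop)) measurable_const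

theorem relationCoeffs_smul_add_smul (u v : ι → ℝ) :
    (relationCoeffs u v).1 • u + (relationCoeffs u v).2 • v = 0 := by
  classical
  unfold relationCoeffs
  split_ifs with huv hu
  · simp [hu]
  · ext i
    simp only [Pi.add_apply, Pi.smul_apply, smul_eq_mul, dotProduct, Finset.sum_mul,
      Pi.zero_apply, neg_mul, ← sub_eq_add_neg, ← Finset.sum_sub_distrib]
    exact Finset.sum_eq_zero fun j _ => by linear_combination -u j * huv j i
  · simp

theorem relationCoeffs_ne_zero {u v : ι → ℝ} (huv : MinorsVanish u v) :
    relationCoeffs u v ≠ 0 := by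
  classical
  unfold relationCoeffs
  split_ifs with hu
  · simp
  · simpa [dotProduct_self_eq_zero] using fun _ => hu

end Minors

theorem AEEqFun.eq_zero_iff_ae_eq_zero {β : Type*} [TopologicalSpace β] [Zero β]
    {f : Ω →ₘ[P] β} : f = 0 ↔ ∀ᵐ ω ∂P, f ω = 0 := by
  rw [AEEqFun.ext_iff]
  exact Filter.eventually_congr (AEEqFun.coeFn_zero.mono fun ω h => by rw [h]; rfl)

theorem AEEqFun.mul_add_mul_eq_zero_iff {a b c d : Ω →ₘ[P] ℝ} :
    a * b + c * d = 0 ↔ ∀ᵐ ω ∂P, a ω * b ω + c ω * d ω = 0 := by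
  rw [AEEqFun.eq_zero_iff_ae_eq_zero]
  refine Filter.eventually_congr ?_
  filter_upwards [AEEqFun.coeFn_add (a * b) (c * d), AEEqFun.coeFn_mul a b,
    AEEqFun.coeFn_mul c d] with ω hadd hab hcd
  simp only [hadd, Pi.add_apply, hab, hcd, Pi.mul_apply]

section Relations

variable {ι : Type*}

theorem measurable_coeFn_pi (x : ι → Ω →ₘ[P] ℝ) : Measurable fun ω i => x i ω :=
  measurable_pi_lambda _ fun i => (x i).measurable

theorem smul_add_smul_eq_zero_iff_ae [Countable ι] {ξ η : Ω →ₘ[P] ℝ} {x y : ι → Ω →ₘ[P] ℝ} :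
    ξ • x + η • y = 0 ↔ ∀ᵐ ω ∂P, ξ ω • (fun i => x i ω) + η ω • (fun i => y i ω) = 0 := by
  simp only [funext_iff, Pi.add_apply, Pi.smul_apply, smul_eq_mul, Pi.zero_apply,
    AEEqFun.mul_add_mul_eq_zero_iff, ae_all_iff]

theorem ind_mul_eq_zero_iff {A : Set Ω} (hA : MeasurableSet A) {ξ : Ω →ₘ[P] ℝ} :
    ind P hA * ξ = 0 ↔ ∀ᵐ ω ∂P, ω ∈ A → ξ ω = 0 := by
  rw [AEEqFun.eq_zero_iff_ae_eq_zero]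
  refine Filter.eventually_congr ?_
  filter_upwards [AEEqFun.coeFn_mul (ind P hA) ξ,
    AEEqFun.coeFn_mk (μ := P) (A.indicator fun _ => (1 : ℝ)) _] with ω hmul hind
  rw [hmul, Pi.mul_apply, ind, hind]
  by_cases hω : ω ∈ A <;> simp [hω]

variable (x y : ι → Ω →ₘ[P] ℝ)

def dependenceSet : Set Ω := {ω | MinorsVanish (fun i => x i ω) (fun i => y i ω)}

theorem measurableSet_dependenceSet [Countable ι] : MeasurableSet (dependenceSet x y) :=
  isClosed_setOf_minorsVanish.measurableSet.preimage
    ((measurable_coeFn_pi x).prodMk (measurable_coeFn_pi y))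

variable {x y}

theorem ae_eq_zero_of_notMem_dependenceSet [Countable ι] {ξ η : Ω →ₘ[P] ℝ}
    (h : ξ • x + η • y = 0) : ∀ᵐ ω ∂P, ω ∉ dependenceSet x y → ξ ω = 0 ∧ η ω = 0 := by
  filter_upwards [smul_add_smul_eq_zero_iff_ae.mp h] with ω hω hωB
  by_contra hne
  exact hωB (.of_smul_add_smul_eq_zero hω fun h0 => hne (Prod.ext_iff.mp h0))

variable (x y)

theorem exists_relation_ne_zero_on_dependenceSet [Fintype ι] :
    ∃ ξ η : Ω →ₘ[P] ℝ, (∀ᵐ ω ∂P, ω ∈ dependenceSet x y → |ξ ω| + |η ω| ≠ 0) ∧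
      ξ • x + η • y = 0 := by
  set c : Ω → ℝ × ℝ := fun ω => relationCoeffs (fun i => x i ω) (fun i => y i ω)
  have hc : Measurable c :=
    measurable_relationCoeffs.comp ((measurable_coeFn_pi x).prodMk (measurable_coeFn_pi y))
  have hξ := AEEqFun.coeFn_mk (μ := P) (fun ω => (c ω).1) hc.fst.aestronglyMeasurable
  have hη := AEEqFun.coeFn_mk (μ := P) (fun ω => (c ω).2) hc.snd.aestronglyMeasurable
  refine ⟨.mk _ hc.fst.aestronglyMeasurable, .mk _ hc.snd.aestronglyMeasurable, ?_, ?_⟩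
  · filter_upwards [hξ, hη] with ω hξω hηω hω
    rw [hξω, hηω, Ne, add_eq_zero_iff_of_nonneg (abs_nonneg _) (abs_nonneg _), abs_eq_zero, abs_eq_zero,
      ← Prod.mk_eq_zero]
    exact relationCoeffs_ne_zero hω
  · rw [smul_add_smul_eq_zero_iff_ae]
    filter_upwards [hξ, hη] with ω hξω hηω
    rw [hξω, hηω]
    exact relationCoeffs_smul_add_smul _ _

theorem measure_dependenceSet_eq_zero_iff [Fintype ι] : P (dependenceSet x y) = 0 ↔
    ∀ ξ η : Ω →ₘ[P] ℝ, ξ • x + η • y = 0 → ξ = 0 ∧ η = 0 := by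
  rw [measure_eq_zero_iff_ae_notMem]
  constructor
  · intro hB ξ η h
    simp only [AEEqFun.eq_zero_iff_ae_eq_zero, ← Filter.eventually_and]
    filter_upwards [hB, ae_eq_zero_of_notMem_dependenceSet h] with ω hω hzero
    exact hzero hω
  · intro hindep
    obtain ⟨ξ, η, hne, hrel⟩ := exists_relation_ne_zero_on_dependenceSet x y
    obtain ⟨hξ, hη⟩ := hindep ξ η hrel
    rw [AEEqFun.eq_zero_iff_ae_eq_zero] at hξ hη
    filter_upwards [hne, hξ, hη] with ω hω hξω hηω hωB
    exact hω hωB (by simp [hξω, hηω])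

end Relations

theorem exists_independence_decomposition_general
    (n : ℕ) (x y : Fin n → Ω →ₘ[P] ℝ) :
    ∃ (A B : Set Ω) (hA : MeasurableSet A) (_hB : MeasurableSet B),
      A ∩ B = ∅ ∧ A ∪ B = Set.univ ∧
      (∀ ξ η : Ω →ₘ[P] ℝ, ξ • x + η • y = 0 → ind P hA * ξ = 0 ∧ ind P hA * η = 0) ∧
      ((∀ ξ η : Ω →ₘ[P] ℝ, ξ • x + η • y = 0 → ξ = 0 ∧ η = 0) → P B = 0) ∧
      (¬ (∀ ξ η : Ω →ₘ[P] ℝ, ξ • x + η • y = 0 → ξ = 0 ∧ η = 0) →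
        0 < P B ∧ ∃ ξ η : Ω →ₘ[P] ℝ,
          (∀ᵐ ω ∂P, ω ∈ B → |ξ ω| + |η ω| ≠ 0) ∧ ξ • x + η • y = 0) := by
  have hB := measurableSet_dependenceSet (P := P) x y
  have hnull := measure_dependenceSet_eq_zero_iff x y
  refine ⟨(dependenceSet x y)ᶜ, dependenceSet x y, hB.compl, hB, Set.compl_inter_self _,
    Set.compl_union_self _, fun ξ η h => ?_, hnull.mpr, fun hdep =>
      ⟨pos_iff_ne_zero.mpr (mt hnull.mp hdep), exists_relation_ne_zero_on_dependenceSet x y⟩⟩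
  simp only [ind_mul_eq_zero_iff, ← Filter.eventually_and, ← imp_and]
  exact ae_eq_zero_of_notMem_dependenceSet h

/-- Proposition 2.1: for `x y : (L⁰)ⁿ` there is a measurable
decomposition `Ω = A ∪ B` such that `x, y` are `L⁰`-independent on `A` and
non-`L⁰`-independent on `B`. -/
theorem exists_independence_decomposition
    [IsProbabilityMeasure P] (n : ℕ) (x y : Fin n → Ω →ₘ[P] ℝ) :
    ∃ (A B : Set Ω) (hA : MeasurableSet A) (_hB : MeasurableSet B),
      A ∩ B = ∅ ∧ A ∪ B = Set.univ ∧
      (∀ ξ η : Ω →ₘ[P] ℝ, ξ • x + η • y = 0 → ind P hA * ξ = 0 ∧ ind P hA * η = 0) ∧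
      ((∀ ξ η : Ω →ₘ[P] ℝ, ξ • x + η • y = 0 → ξ = 0 ∧ η = 0) → P B = 0) ∧
      (¬ (∀ ξ η : Ω →ₘ[P] ℝ, ξ • x + η • y = 0 → ξ = 0 ∧ η = 0) →
        0 < P B ∧ ∃ ξ η : Ω →ₘ[P] ℝ,
          (∀ᵐ ω ∂P, ω ∈ B → |ξ ω| + |η ω| ≠ 0) ∧ ξ • x + η • y = 0) :=
  exists_independence_decomposition_general n x y
end
end

section
/- For each integer n ≥ 2, let T : (L^0)^n → (L^0)^n be an injective map which has the local property. If T maps each L^0-line onto an L^0-line, i.e., for any two distinct points x, y ∈ (L^0)^n the image of the L^0-line l(x,y) under T equals l(T(x), T(y)), then T is an L^0-affine linear map. -/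
/-!
Statements from "The fundamental theorem of affine geometry in `(L⁰)ⁿ`" (Wu–Long).

`L⁰`, the algebra of equivalence classes (under `P`-a.e. equality) of real valued
random variables on a probability space `(Ω, F, P)`, is modeled as `Ω →ₘ[P] ℝ`,
and `(L⁰)ⁿ` as `Fin n → (Ω →ₘ[P] ℝ)` with the pointwise `L⁰`-module structure.
-/

open MeasureTheory

noncomputable section

variable {Ω : Type*} [MeasurableSpace Ω] {P : Measure Ω}

/-!
Normalise to `T 0 = 0`. Since the idempotents of `L⁰` are the indicators `Ĩ_A`, the local property
says that `T` commutes with every idempotent `e`, and with injectivity it gives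
`e • T x = e • T y → e • x = e • y`. As `L⁰` is von Neumann regular, every scalar `ξ` has the
same annihilator as an idempotent, whence `ξ • T x = 0 ↔ ξ • x = 0`.

If `L⁰ x` and `L⁰ y` meet only in `θ`, writing `x + y` as the midpoint of `2x` and `2y` gives
`T (x + y) = a • T x + b • T y`; on the support of `b - 1` the image of the line through `y` and
`x + y` meets the ray of `T x`, and pulling this back by `T` contradicts the independence of `x`
and `y`. So `T` is additive on such pairs, in particular on vectors with disjoint coordinate
supports, and `T x = ∑ k, σₖ (x k) • T eₖ` where `T (r • eₖ) = σₖ r • T eₖ`. Comparing the image of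
the line through `b • eᵢ` and `a • eᵢ + eⱼ`, `i ≠ j`, with the line through their images shows
that all `σₖ` are one map commuting with `lineMap`, i.e. a ring endomorphism `σ` of `L⁰`, and `σ`
fixes the indicators. Such a `σ` maps squares to squares, so it is monotone, and it fixes the
rational constants; comparing `α` and `σ α` with a rational `q` on `{α ≤ q}` and on its
complement gives `σ α = α`.
-/

open Function AffineMap

theorem eq_of_smul_eq_of_one_sub_smul_eq {R M : Type*} [Ring R] [AddCommGroup M] [Module R M]
    {e : R} {a b : M} (h₁ : e • a = e • b) (h₂ : (1 - e) • a = (1 - e) • b) : a = b := by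
  simpa [sub_smul, h₁] using h₂

theorem smul_eq_zero_of_disjoint {R M : Type*} [CommRing R] [AddCommGroup M] [Module R M]
    {x y : M} (hxy : Disjoint (R ∙ x) (R ∙ y)) {a b : R} (h : a • x + b • y = 0) :
    b • y = 0 := by
  refine Submodule.disjoint_def.1 hxy _ ?_
    (Submodule.smul_mem _ b (Submodule.mem_span_singleton_self y))
  rw [eq_neg_of_add_eq_zero_right h, ← neg_smul]
  exact Submodule.smul_mem _ _ (Submodule.mem_span_singleton_self x)

theorem disjoint_span_singleton_of_forall {R ι : Type*} [CommRing R] {u v : ι → R}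
    (h : ∀ k, u k = 0 ∨ v k = 0) : Disjoint (R ∙ u) (R ∙ v) := by
  refine Submodule.disjoint_def.2 fun z hu hv => ?_
  obtain ⟨a, rfl⟩ := Submodule.mem_span_singleton.1 hu
  obtain ⟨b, hb⟩ := Submodule.mem_span_singleton.1 hv
  funext k
  rcases h k with hk | hk
  · simp [hk]
  · rw [← hb]
    simp [hk]

theorem coe_line_eq_setOf {R M : Type*} [Ring R] [AddCommGroup M] [Module R M] (x y : M) :
    (line[R, x, y] : Set M) = {z | ∃ lam : R, z = lam • x + (1 - lam) • y} := by
  ext z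
  rw [SetLike.mem_coe, mem_affineSpan_pair_iff_exists_lineMap_rev_eq]
  simp only [lineMap_apply_module, Set.mem_ofPred_eq, eq_comm (a := z), add_comm]

theorem image_sub_const_line {R M : Type*} [CommRing R] [AddCommGroup M] [Module R M]
    (a b c : M) : (· - c) '' (line[R, a, b] : Set M) = line[R, a - c, b - c] := by
  ext z
  simp only [Set.mem_image, SetLike.mem_coe, mem_affineSpan_pair_iff_exists_lineMap_eq]
  constructor
  · rintro ⟨w, ⟨r, rfl⟩, rfl⟩
    exact ⟨r, by simp only [lineMap_apply_module]; module⟩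
  · rintro ⟨r, rfl⟩
    exact ⟨lineMap a b r, ⟨r, rfl⟩, by simp only [lineMap_apply_module]; module⟩

class IsVonNeumannRegular (R : Type*) [Mul R] : Prop where
  exists_mul_mul_eq (a : R) : ∃ b, a * b * a = a

section MulMulEq

variable {R M : Type*} [CommRing R] [AddCommGroup M] [Module R M] {a b : R}

theorem IsIdempotentElem.mul_of_mul_mul_eq (h : a * b * a = a) : IsIdempotentElem (a * b) := by
  rw [IsIdempotentElem, ← mul_assoc, h]

theorem smul_eq_zero_iff_of_mul_mul_eq (h : a * b * a = a) (w : M) :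
    a • w = 0 ↔ (a * b) • w = 0 := by
  constructor
  · intro hw
    rw [mul_comm, mul_smul, hw, smul_zero]
  · intro hw
    rw [← h, mul_comm, mul_smul, hw, smul_zero]

end MulMulEq

def RingHom.ofMapLineMap {R S : Type*} [Ring R] [Ring S] [Invertible (2 : R)] (σ : R → S)
    (map_zero : σ 0 = 0) (map_one : σ 1 = 1)
    (map_lineMap : ∀ a b r, σ (lineMap a b r) = lineMap (σ a) (σ b) (σ r)) : R →+* S :=
  have map_mul (r b : R) : σ (r * b) = σ r * σ b := by
    simpa [lineMap_apply_module, map_zero] using map_lineMap 0 b r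
  have map_half : σ ⅟2 + σ ⅟2 = 1 := by
    have := map_lineMap 1 0 ⅟2
    rw [lineMap_apply_module, lineMap_apply_module, one_sub_invOf_two, map_zero, map_one] at this
    simp only [smul_eq_mul, mul_one, mul_zero, add_zero] at this
    rwa [eq_sub_iff_add_eq] at this
  { toFun := σ
    map_one' := map_one
    map_mul' := map_mul
    map_zero' := map_zero
    map_add' := fun a b => by
      have := map_lineMap a b ⅟2
      rw [lineMap_apply_module, lineMap_apply_module, one_sub_invOf_two, smul_eq_mul,
        smul_eq_mul, ← mul_add, map_mul, ← map_half, add_sub_cancel_right, smul_eq_mul,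
        smul_eq_mul, ← mul_add] at this
      calc σ (a + b) = (σ ⅟2 + σ ⅟2) * σ (a + b) := by rw [map_half, one_mul]
        _ = (σ ⅟2 + σ ⅟2) * (σ a + σ b) := by rw [add_mul, this, add_mul]
        _ = σ a + σ b := by rw [map_half, one_mul] }

/-- Over `L⁰` the idempotents are exactly the indicators `Ĩ_A`
(`exists_ind_eq_of_isIdempotentElem`), so `smul_map_smul` is the local property. -/
structure IsLocalCollineation (R : Type*) {M N : Type*} [CommRing R] [AddCommGroup M]
    [Module R M] [AddCommGroup N] [Module R N] (T : M → N) : Prop where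
  injective : Injective T
  smul_map_smul : ∀ e : R, IsIdempotentElem e → ∀ x, e • T (e • x) = e • T x
  image_line : ∀ x y, x ≠ y → T '' line[R, x, y] = line[R, T x, T y]

namespace IsLocalCollineation

section Module

variable {R M N : Type*} [CommRing R] [AddCommGroup M] [Module R M] [AddCommGroup N] [Module R N]
  {T : M → N} (hT : IsLocalCollineation R T) {e : R}
include hT

theorem sub_const (c : N) : IsLocalCollineation R fun x => T x - c where
  injective := sub_left_injective.comp hT.injective
  smul_map_smul e he x := by simp only [smul_sub, hT.smul_map_smul e he]
  image_line x y hxy := by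
    rw [show (fun x => T x - c) = (· - c) ∘ T from rfl, Set.image_comp, hT.image_line x y hxy,
      image_sub_const_line]

theorem smul_map_eq (he : IsIdempotentElem e) {x y : M} (h : e • x = e • y) :
    e • T x = e • T y := by
  rw [← hT.smul_map_smul e he x, h, hT.smul_map_smul e he y]

theorem map_smul_of_isIdempotentElem (h0 : T 0 = 0) (he : IsIdempotentElem e) (x : M) :
    T (e • x) = e • T x := by
  refine eq_of_smul_eq_of_one_sub_smul_eq (e := e) ?_ ?_
  · rw [hT.smul_map_smul e he, ← mul_smul, he.eq]
  · have : (1 - e) • (e • x) = (1 - e) • (0 : M) := by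
      rw [smul_smul, sub_mul, one_mul, he.eq, sub_self, zero_smul, smul_zero]
    rw [hT.smul_map_eq he.one_sub this, h0, smul_smul, sub_mul, one_mul, he.eq, sub_self,
      zero_smul, smul_zero]

theorem smul_eq_of_smul_map_eq (he : IsIdempotentElem e) {x y : M} (h : e • T x = e • T y) :
    e • x = e • y := by
  set w := e • y + (1 - e) • x
  have hew : e • w = e • y := by
    simp only [w, smul_add, smul_smul, he.eq, mul_sub, mul_one, sub_self, zero_smul, add_zero]
  have hew' : (1 - e) • w = (1 - e) • x := by
    simp only [w, smul_add, smul_smul, he.one_sub.eq, sub_mul, one_mul, he.eq, sub_self,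
      zero_smul, zero_add]
  have hTw : T w = T x :=
    eq_of_smul_eq_of_one_sub_smul_eq (e := e) (by rw [hT.smul_map_eq he hew, h])
      (hT.smul_map_eq he.one_sub hew')
  rw [← hT.injective hTw, hew]

theorem smul_map_eq_zero_iff [IsVonNeumannRegular R] (h0 : T 0 = 0) (a : R) (x : M) :
    a • T x = 0 ↔ a • x = 0 := by
  obtain ⟨b, hb⟩ := IsVonNeumannRegular.exists_mul_mul_eq a
  have he := IsIdempotentElem.mul_of_mul_mul_eq hb
  rw [smul_eq_zero_iff_of_mul_mul_eq hb, smul_eq_zero_iff_of_mul_mul_eq hb]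
  constructor
  · intro h
    simpa using hT.smul_eq_of_smul_map_eq he (y := 0) (by rw [h, h0, smul_zero])
  · intro h
    simpa [h0] using hT.smul_map_eq he (y := 0) (by rw [h, smul_zero])

theorem exists_map_lineMap {x y : M} (hxy : x ≠ y) (r : R) :
    ∃ s : R, T (lineMap x y r) = lineMap (T x) (T y) s := by
  have : T (lineMap x y r) ∈ T '' line[R, x, y] :=
    Set.mem_image_of_mem T (lineMap_mem_affineSpan_pair r x y)
  rw [hT.image_line x y hxy] at this
  obtain ⟨s, hs⟩ := (mem_affineSpan_pair_iff_exists_lineMap_eq (k := R)).1 this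
  exact ⟨s, hs.symm⟩

theorem exists_lineMap_preimage {x y : M} (hxy : x ≠ y) (s : R) :
    ∃ r : R, T (lineMap x y r) = lineMap (T x) (T y) s := by
  have : lineMap (T x) (T y) s ∈ T '' line[R, x, y] := by
    rw [hT.image_line x y hxy]
    exact lineMap_mem_affineSpan_pair s _ _
  obtain ⟨z, hz, hTz⟩ := this
  obtain ⟨r, rfl⟩ := (mem_affineSpan_pair_iff_exists_lineMap_eq (k := R)).1 hz
  exact ⟨r, hTz⟩

theorem exists_map_smul (h0 : T 0 = 0) {x : M} (hx : x ≠ 0) (r : R) :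
    ∃ s : R, T (r • x) = s • T x := by
  simpa [lineMap_apply_module, h0] using hT.exists_map_lineMap hx.symm r

theorem exists_smul_preimage (h0 : T 0 = 0) {x : M} (hx : x ≠ 0) (s : R) :
    ∃ r : R, T (r • x) = s • T x := by
  simpa [lineMap_apply_module, h0] using hT.exists_lineMap_preimage hx.symm s

theorem sub_one_smul_map_eq_zero_of_map_add_eq [IsVonNeumannRegular R] (h0 : T 0 = 0)
    {x y : M} (hxy : Disjoint (R ∙ x) (R ∙ y)) (hx : x ≠ 0) {a b : R}
    (h : T (x + y) = a • T x + b • T y) : (b - 1) • T y = 0 := by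
  obtain ⟨c, hc⟩ := IsVonNeumannRegular.exists_mul_mul_eq (b - 1)
  have he := IsIdempotentElem.mul_of_mul_mul_eq hc
  set e := (b - 1) * c
  rw [hT.smul_map_eq_zero_iff h0, smul_eq_zero_iff_of_mul_mul_eq hc]
  -- on the support `e` of `b - 1`, the point `(1 + c) • T y - c • T (x + y)` of the image line
  -- through `T y` and `T (x + y)` lies on the ray of `T x`
  obtain ⟨r, hr⟩ := hT.exists_lineMap_preimage (x := y) (y := x + y)
    (by simpa [eq_comm] using hx) (-c)
  obtain ⟨t, ht⟩ := hT.exists_smul_preimage h0 hx (-c * a)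
  have hcoef : e * (1 - -c + -c * b) = 0 := by linear_combination (-1 : R) * he.eq
  have hT' : e • T (lineMap y (x + y) r) = e • T (t • x) := by
    rw [hr, ht, h, lineMap_apply_module]
    calc e • ((1 - -c) • T y + -c • (a • T x + b • T y))
        = (e * (1 - -c + -c * b)) • T y + e • ((-c * a) • T x) := by module
      _ = e • ((-c * a) • T x) := by rw [hcoef, zero_smul, zero_add]
  have hrel := hT.smul_eq_of_smul_map_eq he hT'
  rw [lineMap_apply_module] at hrel
  exact smul_eq_zero_of_disjoint hxy (a := e * (r - t))
    (by linear_combination (norm := module) hrel)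

theorem map_add_of_disjoint [IsVonNeumannRegular R] [Invertible (2 : R)] (h0 : T 0 = 0)
    {x y : M} (hxy : Disjoint (R ∙ x) (R ∙ y)) : T (x + y) = T x + T y := by
  rcases eq_or_ne x 0 with rfl | hx
  · simp [h0]
  rcases eq_or_ne y 0 with rfl | hy
  · simp [h0]
  have hne : (2 : R) • x ≠ (2 : R) • y := by
    intro h
    have hxy' : x = y := by simpa [smul_smul] using congrArg ((⅟2 : R) • ·) h
    exact hx (Submodule.disjoint_def.1 hxy x (Submodule.mem_span_singleton_self x)
      (by rw [hxy']; exact Submodule.mem_span_singleton_self y))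
  obtain ⟨c, hc⟩ := hT.exists_map_smul h0 hx 2
  obtain ⟨d, hd⟩ := hT.exists_map_smul h0 hy 2
  obtain ⟨s, hs⟩ := hT.exists_map_lineMap hne (⅟2)
  have hmid : lineMap ((2 : R) • x) ((2 : R) • y) (⅟2 : R) = x + y := by
    rw [lineMap_apply_module, one_sub_invOf_two, smul_smul, smul_smul, invOf_mul_self, one_smul,
      one_smul]
  rw [hmid, hc, hd, lineMap_apply_module, smul_smul, smul_smul] at hs
  have ha := hT.sub_one_smul_map_eq_zero_of_map_add_eq h0 hxy.symm hy
    (by rw [add_comm, hs, add_comm])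
  have hb := hT.sub_one_smul_map_eq_zero_of_map_add_eq h0 hxy hx hs
  rw [sub_smul, one_smul, sub_eq_zero] at ha hb
  rw [hs, ha, hb]

end Module

section Coordinates

variable {R N ι : Type*} [CommRing R] [AddCommGroup N] [Module R N] [DecidableEq ι]
  {T : (ι → R) → N} (hT : IsLocalCollineation R T) (h0 : T 0 = 0)
include hT h0

theorem exists_map_single [Nontrivial R] (i : ι) (r : R) :
    ∃ s : R, T (Pi.single i r) = s • T (Pi.single i 1) := by
  simpa [← Pi.single_smul'] using
    hT.exists_map_smul h0 (Pi.single_ne_zero_iff.2 (one_ne_zero' R)) r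

theorem exists_single_preimage [Nontrivial R] (i : ι) (s : R) :
    ∃ r : R, T (Pi.single i r) = s • T (Pi.single i 1) := by
  simpa [← Pi.single_smul'] using
    hT.exists_smul_preimage h0 (Pi.single_ne_zero_iff.2 (one_ne_zero' R)) s

variable [IsVonNeumannRegular R]

theorem map_sum_single [Fintype ι] [Invertible (2 : R)] (x : ι → R) :
    T x = ∑ k, T (Pi.single k (x k)) := by
  suffices ∀ s : Finset ι, T (∑ k ∈ s, Pi.single k (x k)) = ∑ k ∈ s, T (Pi.single k (x k)) by
    simpa [Finset.univ_sum_single] using this Finset.univ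
  intro s
  induction s using Finset.induction_on with
  | empty => simp [h0]
  | insert k s hk ih =>
    rw [Finset.sum_insert hk, Finset.sum_insert hk, hT.map_add_of_disjoint h0, ih]
    refine disjoint_span_singleton_of_forall fun m => ?_
    by_cases hm : m = k
    · subst hm
      right
      simp [Finset.sum_apply, Pi.single_apply, hk]
    · left
      simp [hm]

theorem map_single_add_single [Invertible (2 : R)] {i j : ι} (hij : i ≠ j) (u v : R) :
    T (Pi.single i u + Pi.single j v) = T (Pi.single i u) + T (Pi.single j v) := by
  refine hT.map_add_of_disjoint h0 (disjoint_span_singleton_of_forall fun k => ?_)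
  by_cases hk : k = i
  · subst hk
    simp [hij]
  · simp [hk]

theorem smul_map_single_one_eq_zero_iff (i : ι) (a : R) :
    a • T (Pi.single i 1) = 0 ↔ a = 0 := by
  rw [hT.smul_map_eq_zero_iff h0, ← Pi.single_smul', smul_eq_mul, mul_one,
    Pi.single_eq_zero_iff]

theorem eq_of_map_single_eq_smul {i : ι} {r s s' : R}
    (h : T (Pi.single i r) = s • T (Pi.single i 1))
    (h' : T (Pi.single i r) = s' • T (Pi.single i 1)) : s = s' := by
  rw [← sub_eq_zero, ← hT.smul_map_single_one_eq_zero_iff h0 i, sub_smul, ← h, ← h', sub_self]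

theorem eq_zero_of_smul_add_smul_eq_zero [Invertible (2 : R)] [Nontrivial R] {i j : ι}
    (hij : i ≠ j) {a b : R} (h : a • T (Pi.single i 1) + b • T (Pi.single j 1) = 0) :
    a = 0 ∧ b = 0 := by
  obtain ⟨u, hu⟩ := hT.exists_single_preimage h0 i a
  obtain ⟨v, hv⟩ := hT.exists_single_preimage h0 j b
  have huv : (Pi.single i u + Pi.single j v : ι → R) = 0 := hT.injective <| by
    rw [hT.map_single_add_single h0 hij, hu, hv, h, h0]
  have hu0 : u = 0 := by simpa [hij.symm] using congrFun huv i
  have hv0 : v = 0 := by simpa [hij] using congrFun huv j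
  constructor
  · rw [← hT.smul_map_single_one_eq_zero_iff h0 i, ← hu, hu0, Pi.single_zero, h0]
  · rw [← hT.smul_map_single_one_eq_zero_iff h0 j, ← hv, hv0, Pi.single_zero, h0]

theorem map_lineMap_of_map_single [Invertible (2 : R)] [Nontrivial R] {σ : ι → R → R}
    (hσ : ∀ k r, T (Pi.single k r) = σ k r • T (Pi.single k 1)) {i j : ι} (hij : i ≠ j)
    (a b r : R) : σ i (lineMap a b r) = lineMap (σ i a) (σ i b) (σ j r) := by
  have hne : (Pi.single i a : ι → R) ≠ Pi.single i b + Pi.single j 1 := by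
    intro h
    simpa [hij.symm] using congrFun h j
  obtain ⟨s, hs⟩ := hT.exists_map_lineMap hne r
  have hpt : lineMap (Pi.single i a : ι → R) (Pi.single i b + Pi.single j 1) r
      = (Pi.single i (lineMap a b r) + Pi.single j r : ι → R) := by
    simp only [lineMap_apply_module, smul_add, ← Pi.single_smul', smul_eq_mul, mul_one,
      Pi.single_add]
    abel
  rw [hpt, hT.map_single_add_single h0 hij, hT.map_single_add_single h0 hij,
    hσ i (lineMap a b r), hσ j r, hσ i a, hσ i b, lineMap_apply_module (σ i a • _)] at hs
  obtain ⟨h1, h2⟩ := hT.eq_zero_of_smul_add_smul_eq_zero h0 hij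
    (a := σ i (lineMap a b r) - ((1 - s) * σ i a + s * σ i b)) (b := σ j r - s)
    (by linear_combination (norm := module) hs)
  rw [sub_eq_zero] at h1 h2
  rw [h1, h2, lineMap_apply_module, smul_eq_mul, smul_eq_mul]

theorem exists_ringHom_map_eq_sum [Fintype ι] [Nontrivial ι] [Invertible (2 : R)]
    [Nontrivial R] : ∃ σ : R →+* R, (∀ e, IsIdempotentElem e → σ e = e) ∧
      ∀ x, T x = ∑ k, σ (x k) • T (Pi.single k 1) := by
  choose σ hσ using hT.exists_map_single h0
  have hσ0 (k : ι) : σ k 0 = 0 :=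
    hT.eq_of_map_single_eq_smul h0 (hσ k 0) (by rw [Pi.single_zero, h0, zero_smul])
  have hσ1 (k : ι) : σ k 1 = 1 :=
    hT.eq_of_map_single_eq_smul h0 (hσ k 1) (one_smul R _).symm
  have hσσ (k l : ι) : σ k = σ l := by
    rcases eq_or_ne k l with rfl | hkl
    · rfl
    funext r
    simpa [hσ0, hσ1, lineMap_apply_module] using hT.map_lineMap_of_map_single h0 hσ hkl 0 1 r
  obtain ⟨i, j, hij⟩ := exists_pair_ne ι
  refine ⟨RingHom.ofMapLineMap (σ i) (hσ0 i) (hσ1 i) fun a b r => ?_, fun e he => ?_,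
    fun x => ?_⟩
  · rw [hT.map_lineMap_of_map_single h0 hσ hij, hσσ j i]
  · refine hT.eq_of_map_single_eq_smul h0 (hσ i e) ?_
    rw [← hT.map_smul_of_isIdempotentElem h0 he, ← Pi.single_smul', smul_eq_mul, mul_one]
  · rw [hT.map_sum_single h0 x]
    exact Finset.sum_congr rfl fun k _ => by rw [hσ, hσσ k i]; rfl

end Coordinates

end IsLocalCollineation

theorem coeFn_ind {A : Set Ω} (hA : MeasurableSet A) :
    ⇑(ind P hA) =ᵐ[P] A.indicator 1 :=
  AEEqFun.coeFn_mk _ _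

theorem isIdempotentElem_ind {A : Set Ω} (hA : MeasurableSet A) :
    IsIdempotentElem (ind P hA) := by
  rw [IsIdempotentElem, ind, AEEqFun.mk_mul_mk]
  congr 1
  funext ω
  by_cases hω : ω ∈ A <;> simp [hω]

theorem exists_ind_eq_of_isIdempotentElem {e : Ω →ₘ[P] ℝ} (he : IsIdempotentElem e) :
    ∃ (A : Set Ω) (hA : MeasurableSet A), ind P hA = e := by
  have hA := e.measurable (measurableSet_singleton 1)
  refine ⟨⇑e ⁻¹' {1}, hA, AEEqFun.ext ?_⟩
  have hsq := AEEqFun.coeFn_mul e e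
  rw [he.eq] at hsq
  filter_upwards [coeFn_ind (P := P) hA, hsq] with ω h1 h2
  rw [h1]
  by_cases hω : e ω = 1
  · simp [hω]
  · have : e ω * (e ω - 1) = 0 := by simp only [Pi.mul_apply] at h2; linear_combination -h2
    simp [(mul_eq_zero.1 this).resolve_right (sub_ne_zero.2 hω)]

theorem ae_nonneg_ind_mul_iff {A : Set Ω} (hA : MeasurableSet A) (f : Ω →ₘ[P] ℝ) :
    (∀ᵐ ω ∂P, 0 ≤ (ind P hA * f) ω) ↔ ∀ᵐ ω ∂P, ω ∈ A → 0 ≤ f ω := by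
  refine Filter.eventually_congr ?_
  filter_upwards [AEEqFun.coeFn_mul (ind P hA) f, coeFn_ind hA] with ω h1 h2
  rw [h1, Pi.mul_apply, h2]
  by_cases hω : ω ∈ A <;> simp [hω]

namespace MeasureTheory.AEEqFun

def constRingHom : ℝ →+* (Ω →ₘ[P] ℝ) where
  toFun := const Ω
  map_one' := rfl
  map_mul' _ _ := (mk_mul_mk _ _ _ _).symm
  map_zero' := rfl
  map_add' _ _ := (mk_add_mk _ _ _ _).symm

instance : Invertible (2 : Ω →ₘ[P] ℝ) :=
  (Invertible.map constRingHom (2 : ℝ)).copy 2 (map_ofNat constRingHom 2).symm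

instance [NeZero P] : Nontrivial (Ω →ₘ[P] ℝ) :=
  ⟨0, 1, fun h => by simpa using (mk_eq_mk.1 h).exists⟩

instance : IsVonNeumannRegular (Ω →ₘ[P] ℝ) where
  exists_mul_mul_eq a := induction_on a fun f hf =>
    ⟨mk f⁻¹ hf.aemeasurable.inv.aestronglyMeasurable, by
      rw [mk_mul_mk, mk_mul_mk]
      congr 1
      funext ω
      exact mul_inv_mul_cancel (f ω)⟩

theorem exists_mul_self_eq_of_ae_nonneg {a : Ω →ₘ[P] ℝ} (ha : ∀ᵐ ω ∂P, 0 ≤ a ω) :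
    ∃ b, b * b = a := by
  refine ⟨mk (fun ω => √(a ω)) a.measurable.sqrt.aestronglyMeasurable, ?_⟩
  rw [mk_mul_mk]
  conv_rhs => rw [← mk_coeFn a]
  refine mk_eq_mk.2 ?_
  filter_upwards [ha] with ω hω
  exact Real.mul_self_sqrt hω

theorem ae_nonneg_map_of_ae_nonneg (σ : (Ω →ₘ[P] ℝ) →+* (Ω →ₘ[P] ℝ)) {a : Ω →ₘ[P] ℝ}
    (ha : ∀ᵐ ω ∂P, 0 ≤ a ω) : ∀ᵐ ω ∂P, 0 ≤ σ a ω := by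
  obtain ⟨b, rfl⟩ := exists_mul_self_eq_of_ae_nonneg ha
  filter_upwards [coeFn_mul (σ b) (σ b)] with ω hω
  rw [map_mul, hω]
  exact mul_self_nonneg _

theorem ringHom_eq_id_of_map_ind (σ : (Ω →ₘ[P] ℝ) →+* (Ω →ₘ[P] ℝ))
    (hσ : ∀ (A : Set Ω) (hA : MeasurableSet A), σ (ind P hA) = ind P hA) :
    σ = RingHom.id _ := by
  have hσ_rat (q : ℚ) : σ (constRingHom q) = constRingHom q :=
    congrArg (· q) (RingHom.ext_rat ((σ.comp constRingHom).comp (Rat.castHom ℝ))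
      (constRingHom.comp (Rat.castHom ℝ)))
  have hσ_nonneg {A : Set Ω} (hA : MeasurableSet A) {f : Ω →ₘ[P] ℝ}
      (hf : ∀ᵐ ω ∂P, ω ∈ A → 0 ≤ f ω) : ∀ᵐ ω ∂P, ω ∈ A → 0 ≤ σ f ω := by
    rw [← ae_nonneg_ind_mul_iff hA] at hf ⊢
    rw [← hσ A hA, ← map_mul]
    exact ae_nonneg_map_of_ae_nonneg σ hf
  refine RingHom.ext fun α => AEEqFun.ext ?_
  have hq (q : ℚ) : ∀ᵐ ω ∂P, (α ω ≤ q → σ α ω ≤ q) ∧ (q < α ω → q ≤ σ α ω) := by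
    have hA : MeasurableSet (⇑α ⁻¹' Set.Iic (q : ℝ)) := α.measurable measurableSet_Iic
    have hc : ⇑(constRingHom (q : ℝ) : Ω →ₘ[P] ℝ) =ᵐ[P] fun _ => (q : ℝ) := coeFn_const _ _
    have h1 := hσ_nonneg hA (f := constRingHom (q : ℝ) - α) <| by
      filter_upwards [coeFn_sub (constRingHom (q : ℝ)) α, hc] with ω h h' hω
      simpa [h, h'] using hω
    have h2 := hσ_nonneg hA.compl (f := α - constRingHom (q : ℝ)) <| by
      filter_upwards [coeFn_sub α (constRingHom (q : ℝ)), hc] with ω h h' hω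
      simpa [h, h'] using (not_le.1 (Set.notMem_of_mem_compl hω)).le
    rw [map_sub, hσ_rat] at h1 h2
    filter_upwards [h1, h2, coeFn_sub (constRingHom (q : ℝ)) (σ α),
      coeFn_sub (σ α) (constRingHom (q : ℝ)), hc] with ω h1 h2 h3 h4 h'
    simp only [h3, h4, Pi.sub_apply, h', sub_nonneg, Set.mem_preimage, Set.mem_Iic,
      Set.mem_compl_iff, not_le] at h1 h2
    exact ⟨h1, h2⟩
  filter_upwards [ae_all_iff.2 hq] with ω h
  exact le_antisymm (le_of_forall_lt_rat_imp_le fun q hlt => (h q).1 hlt.le)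
    (le_of_forall_rat_lt_imp_le fun q hlt => (h q).2 hlt)

end MeasureTheory.AEEqFun

/-- Theorem 3.1, the fundamental theorem of affine geometry in `(L⁰)ⁿ`:
for `n ≥ 2`, an injective map `T : (L⁰)ⁿ → (L⁰)ⁿ` with the local property which maps
each `L⁰`-line onto an `L⁰`-line must be `L⁰`-affine linear. -/
theorem fundamental_theorem_of_affine_geometry
    [IsProbabilityMeasure P] (n : ℕ) (hn : 2 ≤ n)
    (T : (Fin n → Ω →ₘ[P] ℝ) → (Fin n → Ω →ₘ[P] ℝ))
    (hinj : Function.Injective T)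
    (hloc : ∀ (x : Fin n → Ω →ₘ[P] ℝ) (A : Set Ω) (hA : MeasurableSet A),
        ind P hA • T (ind P hA • x) = ind P hA • T x)
    (hline : ∀ x y : Fin n → Ω →ₘ[P] ℝ, x ≠ y →
        T '' {z | ∃ lam : Ω →ₘ[P] ℝ, z = lam • x + (1 - lam) • y}
          = {z | ∃ lam : Ω →ₘ[P] ℝ, z = lam • T x + (1 - lam) • T y}) :
    (∀ x y : Fin n → Ω →ₘ[P] ℝ,
        T (x + y) - T 0 = (T x - T 0) + (T y - T 0)) ∧
    (∀ (ξ : Ω →ₘ[P] ℝ) (x : Fin n → Ω →ₘ[P] ℝ),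
        T (ξ • x) - T 0 = ξ • (T x - T 0)) := by
  have hT : IsLocalCollineation (Ω →ₘ[P] ℝ) T :=
    { injective := hinj
      smul_map_smul := fun e he x => by
        obtain ⟨A, hA, rfl⟩ := exists_ind_eq_of_isIdempotentElem he
        exact hloc x A hA
      image_line := fun x y hxy => by simpa only [coe_line_eq_setOf] using hline x y hxy }
  have : Nontrivial (Fin n) := Fin.nontrivial_iff_two_le.2 hn
  obtain ⟨σ, hσ_ind, hσ_sum⟩ := (hT.sub_const (T 0)).exists_ringHom_map_eq_sum (sub_self _)
  obtain rfl : σ = RingHom.id _ :=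
    AEEqFun.ringHom_eq_id_of_map_ind σ fun A hA => hσ_ind _ (isIdempotentElem_ind hA)
  refine ⟨fun x y => ?_, fun ξ x => ?_⟩
  · rw [hσ_sum, hσ_sum x, hσ_sum y, ← Finset.sum_add_distrib]
    simp only [RingHom.id_apply, Pi.add_apply, add_smul]
  · rw [hσ_sum, hσ_sum x, Finset.smul_sum]
    simp only [RingHom.id_apply, Pi.smul_apply, smul_eq_mul, mul_smul]
end
end

section
/- Let n ≥ 2 be an integer and S : (L^0)^n → (L^0)^n an injective map with the local property satisfying S(θ) = θ which maps each L^0-line onto an L^0-line. If x, y ∈ (L^0)^n are L^0-independent, then for any ξ, η ∈ L^0 there exist α, β ∈ L^0 such that S(ξx + ηy) = αS(x) + βS(y), and conversely for any α, β ∈ L^0 there exist ξ, η ∈ L^0 such that αS(x) + βS(y) = S(ξx + ηy). -/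
/-!
Statements from "The fundamental theorem of affine geometry in `(L⁰)ⁿ`" (Wu–Long).

`L⁰`, the algebra of equivalence classes (under `P`-a.e. equality) of real valued
random variables on a probability space `(Ω, F, P)`, is modeled as `Ω →ₘ[P] ℝ`,
and `(L⁰)ⁿ` as `Fin n → (Ω →ₘ[P] ℝ)` with the pointwise `L⁰`-module structure.
-/

open MeasureTheory

noncomputable section

variable {Ω : Type*} [MeasurableSpace Ω] {P : Measure Ω}

set_option maxHeartbeats 1000000 in
/-- from Step 1 of the proof of Theorem 3.1: for `S` as in the
fundamental theorem and `x, y` `L⁰`-independent, the image of the `L⁰`-planes spanned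
by `x, y` under `S` is contained in (and contains) the `L⁰`-plane spanned by `S x, S y`. -/
theorem image_of_span
    [IsProbabilityMeasure P] (n : ℕ) (hn : 2 ≤ n)
    (S : (Fin n → Ω →ₘ[P] ℝ) → (Fin n → Ω →ₘ[P] ℝ))
    (hinj : Function.Injective S)
    (hloc : ∀ (x : Fin n → Ω →ₘ[P] ℝ) (A : Set Ω) (hA : MeasurableSet A),
        ind P hA • S (ind P hA • x) = ind P hA • S x)
    (hS0 : S 0 = 0)
    (hline : ∀ x y : Fin n → Ω →ₘ[P] ℝ, x ≠ y →
        S '' {z | ∃ lam : Ω →ₘ[P] ℝ, z = lam • x + (1 - lam) • y}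
          = {z | ∃ lam : Ω →ₘ[P] ℝ, z = lam • S x + (1 - lam) • S y})
    (x y : Fin n → Ω →ₘ[P] ℝ)
    (hxy : ∀ ξ η : Ω →ₘ[P] ℝ, ξ • x + η • y = 0 → ξ = 0 ∧ η = 0) :
    (∀ ξ η : Ω →ₘ[P] ℝ, ∃ α β : Ω →ₘ[P] ℝ,
        S (ξ • x + η • y) = α • S x + β • S y) ∧
    (∀ α β : Ω →ₘ[P] ℝ, ∃ ξ η : Ω →ₘ[P] ℝ,
        α • S x + β • S y = S (ξ • x + η • y)) := by
  classical
  -- nontriviality of L⁰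
  have h1 : (1 : Ω →ₘ[P] ℝ) ≠ 0 := by
    intro h
    have h2 : ((1 : Ω →ₘ[P] ℝ) : Ω → ℝ) =ᵐ[P] ((0 : Ω →ₘ[P] ℝ) : Ω → ℝ) := by rw [h]
    have h3 : (fun _ : Ω => (1 : ℝ)) =ᵐ[P] fun _ : Ω => (0 : ℝ) :=
      (AEEqFun.coeFn_one.symm.trans h2).trans AEEqFun.coeFn_zero
    obtain ⟨ω, hω⟩ := h3.exists
    exact one_ne_zero hω
  set half : Ω →ₘ[P] ℝ := (2⁻¹ : ℝ) • (1 : Ω →ₘ[P] ℝ) with hhalf_def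
  have hhalfadd : half + half = 1 := by
    rw [hhalf_def, ← add_smul]
    norm_num
  have hhalf2 : half * 2 = 1 := by
    rw [mul_two, hhalfadd]
  have hhalfsub : (1 : Ω →ₘ[P] ℝ) - half = half := by
    rw [sub_eq_iff_eq_add, ← hhalfadd]
  have hcancel : ∀ a : Ω →ₘ[P] ℝ, 2 * a = 0 → a = 0 := by
    intro a ha
    have : half * (2 * a) = 0 := by rw [ha, mul_zero]
    rwa [← mul_assoc, hhalf2, one_mul] at this
  have hind : ∀ a b : Ω →ₘ[P] ℝ, a • x = b • y → a = 0 ∧ b = 0 := by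
    intro a b hab
    have h := hxy a (-b) (by rw [neg_smul, ← hab, add_neg_cancel])
    exact ⟨h.1, neg_eq_zero.mp h.2⟩
  have hx0 : x ≠ 0 := by
    intro h
    exact h1 (hxy 1 0 (by simp [h])).1
  have hy0 : y ≠ 0 := by
    intro h
    exact h1 (hxy 0 1 (by simp [h])).2
  -- image of the "axis" lines
  have haxisx : ∀ c : Ω →ₘ[P] ℝ, ∃ a : Ω →ₘ[P] ℝ, S (c • x) = a • S x := by
    intro c
    have hmem : S (c • x) ∈ S '' {z | ∃ lam : Ω →ₘ[P] ℝ, z = lam • x + (1 - lam) • (0 : Fin n → Ω →ₘ[P] ℝ)} :=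
      ⟨c • x, ⟨c, by simp⟩, rfl⟩
    rw [hline x 0 hx0] at hmem
    obtain ⟨a, ha⟩ := hmem
    exact ⟨a, by simpa [hS0] using ha⟩
  have haxisy : ∀ c : Ω →ₘ[P] ℝ, ∃ b : Ω →ₘ[P] ℝ, S (c • y) = b • S y := by
    intro c
    have hmem : S (c • y) ∈ S '' {z | ∃ lam : Ω →ₘ[P] ℝ, z = lam • y + (1 - lam) • (0 : Fin n → Ω →ₘ[P] ℝ)} :=
      ⟨c • y, ⟨c, by simp⟩, rfl⟩
    rw [hline y 0 hy0] at hmem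
    obtain ⟨b, hb⟩ := hmem
    exact ⟨b, by simpa [hS0] using hb⟩
  have haxisx' : ∀ a : Ω →ₘ[P] ℝ, ∃ c : Ω →ₘ[P] ℝ, S (c • x) = a • S x := by
    intro a
    have hmem : a • S x ∈ S '' {z | ∃ lam : Ω →ₘ[P] ℝ, z = lam • x + (1 - lam) • (0 : Fin n → Ω →ₘ[P] ℝ)} := by
      rw [hline x 0 hx0]
      exact ⟨a, by simp [hS0]⟩
    obtain ⟨w, ⟨c, hc⟩, hw⟩ := hmem
    exact ⟨c, by rw [← hw, hc]; simp⟩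
  have haxisy' : ∀ b : Ω →ₘ[P] ℝ, ∃ c : Ω →ₘ[P] ℝ, S (c • y) = b • S y := by
    intro b
    have hmem : b • S y ∈ S '' {z | ∃ lam : Ω →ₘ[P] ℝ, z = lam • y + (1 - lam) • (0 : Fin n → Ω →ₘ[P] ℝ)} := by
      rw [hline y 0 hy0]
      exact ⟨b, by simp [hS0]⟩
    obtain ⟨w, ⟨c, hc⟩, hw⟩ := hmem
    exact ⟨c, by rw [← hw, hc]; simp⟩
  constructor
  · intro ξ η
    by_cases hc : ξ • x = η • y
    · obtain ⟨hξ, hη⟩ := hind ξ η hc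
      refine ⟨0, 0, ?_⟩
      rw [hξ, hη]
      simp [hS0]
    · have huv : (2 * ξ) • x ≠ (2 * η) • y := by
        intro h
        obtain ⟨ha, hb⟩ := hind _ _ h
        have hξ0 : ξ = 0 := hcancel ξ ha
        have hη0 : η = 0 := hcancel η hb
        exact hc (by rw [hξ0, hη0, zero_smul, zero_smul])
      have hz : ξ • x + η • y ∈ {z | ∃ lam : Ω →ₘ[P] ℝ,
          z = lam • ((2 * ξ) • x) + (1 - lam) • ((2 * η) • y)} := by
        refine ⟨half, ?_⟩
        rw [smul_smul, smul_smul, hhalfsub, ← mul_assoc, ← mul_assoc, hhalf2, one_mul, one_mul]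
      have hmem : S (ξ • x + η • y) ∈
          S '' {z | ∃ lam : Ω →ₘ[P] ℝ,
            z = lam • ((2 * ξ) • x) + (1 - lam) • ((2 * η) • y)} := ⟨_, hz, rfl⟩
      rw [hline _ _ huv] at hmem
      obtain ⟨lam, hlam⟩ := hmem
      obtain ⟨a, ha⟩ := haxisx (2 * ξ)
      obtain ⟨b, hb⟩ := haxisy (2 * η)
      refine ⟨lam * a, (1 - lam) * b, ?_⟩
      rw [hlam, ha, hb, smul_smul, smul_smul]
  · intro α β
    obtain ⟨a, ha⟩ := haxisx' (2 * α)
    obtain ⟨b, hb⟩ := haxisy' (2 * β)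
    by_cases hc : a • x = b • y
    · obtain ⟨ha0, hb0⟩ := hind a b hc
      refine ⟨0, 0, ?_⟩
      have hαx : (2 * α) • S x = 0 := by rw [← ha, ha0, zero_smul, hS0]
      have hβy : (2 * β) • S y = 0 := by rw [← hb, hb0, zero_smul, hS0]
      have h1' : α • S x = 0 := by
        have h := congrArg (fun v => half • v) hαx
        simp only [smul_smul, smul_zero] at h
        rwa [← mul_assoc, hhalf2, one_mul] at h
      have h2' : β • S y = 0 := by
        have h := congrArg (fun v => half • v) hβy
        simp only [smul_smul, smul_zero] at h
        rwa [← mul_assoc, hhalf2, one_mul] at h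
      rw [h1', h2', zero_smul, zero_smul, zero_add, hS0]
    · have hne : a • x ≠ b • y := hc
      have hmem : α • S x + β • S y ∈
          S '' {z | ∃ lam : Ω →ₘ[P] ℝ, z = lam • (a • x) + (1 - lam) • (b • y)} := by
        rw [hline _ _ hne]
        refine ⟨half, ?_⟩
        rw [ha, hb, smul_smul, smul_smul, hhalfsub, ← mul_assoc, ← mul_assoc, hhalf2,
          one_mul, one_mul]
      obtain ⟨w, ⟨lam, hw⟩, hSw⟩ := hmem
      refine ⟨lam * a, (1 - lam) * b, ?_⟩
      rw [← hSw, hw, smul_smul, smul_smul]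
end
end

section
/- Let n ≥ 2 be an integer and S : (L^0)^n → (L^0)^n an injective map with the local property satisfying S(θ) = θ which maps each L^0-line onto an L^0-line. Then for any x, y ∈ (L^0)^n which are L^0-independent, S(x + y) = S(x) + S(y). -/
/-!
Statements from "The fundamental theorem of affine geometry in `(L⁰)ⁿ`" (Wu–Long).

`L⁰`, the algebra of equivalence classes (under `P`-a.e. equality) of real valued
random variables on a probability space `(Ω, F, P)`, is modeled as `Ω →ₘ[P] ℝ`,
and `(L⁰)ⁿ` as `Fin n → (Ω →ₘ[P] ℝ)` with the pointwise `L⁰`-module structure.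
-/

open MeasureTheory

noncomputable section

variable {Ω : Type*} [MeasurableSpace Ω] {P : Measure Ω}

namespace WuLongAux

lemma coeFn_ind {A : Set Ω} (hA : MeasurableSet A) :
    ⇑(ind P hA) =ᵐ[P] A.indicator fun _ => (1 : ℝ) :=
  AEEqFun.coeFn_mk _ _

lemma ind_compl_mul {A : Set Ω} (hA : MeasurableSet A) : ind P hA.compl * ind P hA = 0 := by
  apply AEEqFun.ext
  filter_upwards [AEEqFun.coeFn_mul (ind P hA.compl) (ind P hA),
    coeFn_ind hA.compl, coeFn_ind hA, AEEqFun.coeFn_zero (β := ℝ) (μ := P)] with ω h1 h2 h3 h4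
  rw [h1, h4]
  show (ind P hA.compl) ω * (ind P hA) ω = _
  rw [h2, h3]
  by_cases h : ω ∈ A <;> simp [Set.indicator_apply, h]

lemma ind_add_compl {A : Set Ω} (hA : MeasurableSet A) : ind P hA + ind P hA.compl = 1 := by
  apply AEEqFun.ext
  filter_upwards [AEEqFun.coeFn_add (ind P hA) (ind P hA.compl),
    coeFn_ind hA.compl, coeFn_ind hA, AEEqFun.coeFn_one (β := ℝ) (μ := P)] with ω h1 h2 h3 h4
  rw [h1, h4]
  show (ind P hA) ω + (ind P hA.compl) ω = _
  rw [h2, h3]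
  by_cases h : ω ∈ A <;> simp [Set.indicator_apply, h]

lemma one_ne_zero_L0 [IsProbabilityMeasure P] : (1 : Ω →ₘ[P] ℝ) ≠ 0 := by
  intro h
  have h1 : (1 : Ω → ℝ) =ᵐ[P] (0 : Ω → ℝ) := by
    calc (1 : Ω → ℝ) =ᵐ[P] ⇑(1 : Ω →ₘ[P] ℝ) := AEEqFun.coeFn_one.symm
    _ = ⇑(0 : Ω →ₘ[P] ℝ) := by rw [h]
    _ =ᵐ[P] 0 := AEEqFun.coeFn_zero
  obtain ⟨ω, hω⟩ := h1.exists
  simp at hω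

/-- The constant `1/2` in `L⁰`, with `half * (1 + 1) = 1`. -/
def half (P : Measure Ω) : Ω →ₘ[P] ℝ :=
  AEEqFun.mk (fun _ => (2 : ℝ)⁻¹) aestronglyMeasurable_const

lemma coeFn_half : ⇑(half P) =ᵐ[P] fun _ => (2 : ℝ)⁻¹ :=
  AEEqFun.coeFn_mk _ _

lemma half_mul_two : half P * (1 + 1) = 1 := by
  apply AEEqFun.ext
  filter_upwards [AEEqFun.coeFn_mul (half P) (1 + 1), AEEqFun.coeFn_add (1 : Ω →ₘ[P] ℝ) 1,
    AEEqFun.coeFn_one (β := ℝ) (μ := P), coeFn_half] with ω h1 h2 h3 h4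
  simp only [Pi.mul_apply, Pi.add_apply, Pi.one_apply] at *
  rw [h1, h2, h3, h4]
  norm_num

/-- Core step: if `S (x + y) = α • S x + β • S y` and the lines through `x` parallel to `y`
behave as expected, then `α = 1`. -/
lemma alpha_eq_one [IsProbabilityMeasure P] {n : ℕ}
    (S : (Fin n → Ω →ₘ[P] ℝ) → (Fin n → Ω →ₘ[P] ℝ))
    (hinj : Function.Injective S)
    (hSind : ∀ (u : Fin n → Ω →ₘ[P] ℝ) {A : Set Ω} (hA : MeasurableSet A),
        S (ind P hA • u) = ind P hA • S u)
    (x y : Fin n → Ω →ₘ[P] ℝ)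
    (hind : ∀ ξ η : Ω →ₘ[P] ℝ, ξ • x + η • y = 0 → ξ = 0 ∧ η = 0)
    (α β : Ω →ₘ[P] ℝ)
    (hrep : S (x + y) = α • S x + β • S y)
    (hlx : ∀ t : Ω →ₘ[P] ℝ, ∃ ν : Ω →ₘ[P] ℝ, S (x + ν • y) = t • S x + (1 - t) • S (x + y))
    (hly : ∀ t : Ω →ₘ[P] ℝ, ∃ κ : Ω →ₘ[P] ℝ, S (κ • y) = t • S y) :
    α = 1 := by
  classical
  obtain hαm := α.aestronglyMeasurable.aemeasurable
  set g := hαm.mk ⇑α with hgdef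
  have hg : Measurable g := hαm.measurable_mk
  have hae : ⇑α =ᵐ[P] g := hαm.ae_eq_mk
  set B : Set Ω := g ⁻¹' {1} with hBdef
  have hB : MeasurableSet B := hg (measurableSet_singleton 1)
  set lamf : Ω → ℝ := fun ω => if g ω = 1 then 0 else g ω / (g ω - 1) with hlamf
  have hlamf_meas : Measurable lamf :=
    Measurable.ite hB measurable_const (hg.div (hg.sub measurable_const))
  set lam : Ω →ₘ[P] ℝ := AEEqFun.mk lamf hlamf_meas.aestronglyMeasurable with hlamdef
  -- Key algebraic identity: lam * (1 - α) + α = Ĩ_B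
  have hkey : lam * (1 - α) + α = ind P hB := by
    apply AEEqFun.ext
    filter_upwards [AEEqFun.coeFn_add (lam * (1 - α)) α, AEEqFun.coeFn_mul lam (1 - α),
      AEEqFun.coeFn_sub (1 : Ω →ₘ[P] ℝ) α, AEEqFun.coeFn_one (β := ℝ) (μ := P),
      AEEqFun.coeFn_mk lamf hlamf_meas.aestronglyMeasurable, hae, coeFn_ind hB]
      with ω h1 h2 h3 h4 h5 h6 h7
    rw [h1, h7]
    show (lam * (1 - α)) ω + α ω = _
    rw [h2]
    show lam ω * ((1 : Ω →ₘ[P] ℝ) - α) ω + α ω = _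
    rw [h3]
    show lam ω * ((1 : Ω →ₘ[P] ℝ) ω - α ω) + α ω = _
    rw [h4, h5, h6]
    show lamf ω * ((1 : ℝ) - g ω) + g ω = B.indicator (fun _ => (1:ℝ)) ω
    by_cases h : g ω = 1
    · simp [Set.indicator_apply, hBdef, hlamf, h]
    · have hne : g ω - 1 ≠ 0 := sub_ne_zero.mpr h
      simp only [Set.indicator_apply, hBdef, hlamf, Set.mem_preimage, Set.mem_singleton_iff,
        if_neg h]
      field_simp
      ring
  set e : Ω →ₘ[P] ℝ := ind P hB.compl with hedef
  have he0 : e * ind P hB = 0 := ind_compl_mul hB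
  obtain ⟨ν, hu⟩ := hlx lam
  obtain ⟨κ, hv⟩ := hly ((1 - lam) * β)
  -- `e • p = e • q`
  have hpq : e • (lam • S x + (1 - lam) • S (x + y)) = e • (((1 - lam) * β) • S y) := by
    rw [hrep]
    funext i
    simp only [Pi.smul_apply, Pi.add_apply, smul_eq_mul]
    linear_combination e * (S x i) * hkey + (S x i) * he0
  have h1 : S (e • (x + ν • y)) = S (e • (κ • y)) := by
    rw [hSind _ hB.compl, hSind _ hB.compl, hu, hv, hpq]
  have h3 : e • (x + ν • y) = e • (κ • y) := hinj h1
  have h4 : e • x + (e * (ν - κ)) • y = 0 := by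
    funext i
    have h5 := congrFun h3 i
    simp only [Pi.smul_apply, Pi.add_apply, smul_eq_mul, Pi.zero_apply] at h5 ⊢
    linear_combination h5
  have he : e = 0 := (hind e _ h4).1
  -- conclude α = 1
  have h6 : (Bᶜ.indicator fun _ => (1 : ℝ)) =ᵐ[P] 0 := by
    calc (Bᶜ.indicator fun _ => (1 : ℝ)) =ᵐ[P] ⇑(ind P hB.compl) := (coeFn_ind hB.compl).symm
    _ = ⇑(0 : Ω →ₘ[P] ℝ) := by rw [← hedef, he]
    _ =ᵐ[P] 0 := AEEqFun.coeFn_zero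
  apply AEEqFun.ext
  filter_upwards [h6, hae, AEEqFun.coeFn_one (β := ℝ) (μ := P)] with ω hω h1 h2
  rw [h1, h2]
  show g ω = 1
  by_contra hne
  have hmem : ω ∈ Bᶜ := by simp [hBdef, hne]
  simp [Set.indicator_apply, hmem] at hω

end WuLongAux

/-- Step 1 of the proof of Theorem 3.1: for `S` as in the fundamental
theorem, `S (x + y) = S x + S y` whenever `x, y` are `L⁰`-independent. -/
theorem additive_on_independent_pairs
    [IsProbabilityMeasure P] (n : ℕ) (hn : 2 ≤ n)
    (S : (Fin n → Ω →ₘ[P] ℝ) → (Fin n → Ω →ₘ[P] ℝ))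
    (hinj : Function.Injective S)
    (hloc : ∀ (x : Fin n → Ω →ₘ[P] ℝ) (A : Set Ω) (hA : MeasurableSet A),
        ind P hA • S (ind P hA • x) = ind P hA • S x)
    (hS0 : S 0 = 0)
    (hline : ∀ x y : Fin n → Ω →ₘ[P] ℝ, x ≠ y →
        S '' {z | ∃ lam : Ω →ₘ[P] ℝ, z = lam • x + (1 - lam) • y}
          = {z | ∃ lam : Ω →ₘ[P] ℝ, z = lam • S x + (1 - lam) • S y}) :
    ∀ x y : Fin n → Ω →ₘ[P] ℝ,
      (∀ ξ η : Ω →ₘ[P] ℝ, ξ • x + η • y = 0 → ξ = 0 ∧ η = 0) →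
      S (x + y) = S x + S y := by
  intro x y hind
  have h1ne : (1 : Ω →ₘ[P] ℝ) ≠ 0 := WuLongAux.one_ne_zero_L0
  -- S commutes with multiplication by indicator functions
  have hSind : ∀ (u : Fin n → Ω →ₘ[P] ℝ) {A : Set Ω} (hA : MeasurableSet A),
      S (ind P hA • u) = ind P hA • S u := by
    intro u A hA
    have hz : ind P hA.compl • (ind P hA • u) = 0 := by
      funext i
      simp only [Pi.smul_apply, smul_eq_mul, Pi.zero_apply]
      linear_combination (u i) * WuLongAux.ind_compl_mul (P := P) hA
    have hc : ind P hA.compl • S (ind P hA • u) = 0 := by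
      have h := hloc (ind P hA • u) Aᶜ hA.compl
      rw [hz, hS0] at h
      rw [← h]
      funext i
      simp only [Pi.smul_apply, smul_eq_mul, Pi.zero_apply, mul_zero]
    calc S (ind P hA • u)
        = (ind P hA + ind P hA.compl) • S (ind P hA • u) := by
          rw [WuLongAux.ind_add_compl]
          funext i
          simp only [Pi.smul_apply, smul_eq_mul, one_mul]
      _ = ind P hA • S (ind P hA • u) + ind P hA.compl • S (ind P hA • u) := by
          funext i
          simp only [Pi.smul_apply, Pi.add_apply, smul_eq_mul]
          ring
      _ = ind P hA • S u := by rw [hc, add_zero, hloc u A hA]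
  have hx0 : x ≠ 0 := by
    intro h
    refine h1ne ((hind 1 0 ?_).1)
    subst h
    funext i
    simp only [Pi.smul_apply, Pi.add_apply, smul_eq_mul, Pi.zero_apply, mul_zero, zero_mul,
      add_zero]
  have hy0 : y ≠ 0 := by
    intro h
    refine h1ne ((hind 0 1 ?_).2)
    subst h
    funext i
    simp only [Pi.smul_apply, Pi.add_apply, smul_eq_mul, Pi.zero_apply, mul_zero, zero_mul,
      add_zero]
  have h2ne : ((1 : Ω →ₘ[P] ℝ) + 1) ≠ 0 := by
    intro h
    apply h1ne
    have h2 := WuLongAux.half_mul_two (P := P)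
    rw [h, mul_zero] at h2
    exact h2.symm
  have hxxy : x ≠ x + y := by
    intro h
    refine h1ne ((hind 0 1 ?_).2)
    funext i
    have h2 := congrFun h i
    simp only [Pi.add_apply] at h2
    simp only [Pi.smul_apply, Pi.add_apply, smul_eq_mul, Pi.zero_apply]
    linear_combination -h2
  have hind' : ∀ ξ η : Ω →ₘ[P] ℝ, ξ • y + η • x = 0 → ξ = 0 ∧ η = 0 := by
    intro ξ η h
    have h2 := hind η ξ (by rw [add_comm]; exact h)
    exact ⟨h2.2, h2.1⟩
  have hyyx : y ≠ y + x := by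
    intro h
    refine h1ne ((hind' 0 1 ?_).2)
    funext i
    have h2 := congrFun h i
    simp only [Pi.add_apply] at h2
    simp only [Pi.smul_apply, Pi.add_apply, smul_eq_mul, Pi.zero_apply]
    linear_combination -h2
  -- image of a multiple of z is a multiple of S z
  have hmulfwd : ∀ (z : Fin n → Ω →ₘ[P] ℝ), z ≠ 0 → ∀ c : Ω →ₘ[P] ℝ,
      ∃ a : Ω →ₘ[P] ℝ, S (c • z) = a • S z := by
    intro z hz c
    have hmem : c • z ∈ {w | ∃ lam : Ω →ₘ[P] ℝ,
        w = lam • z + (1 - lam) • (0 : Fin n → Ω →ₘ[P] ℝ)} := by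
      refine ⟨c, ?_⟩
      funext i
      simp only [Pi.smul_apply, Pi.add_apply, smul_eq_mul, Pi.zero_apply]
      ring
    have h2 := Set.mem_image_of_mem S hmem
    rw [hline z 0 hz] at h2
    obtain ⟨a, ha⟩ := h2
    refine ⟨a, ?_⟩
    rw [ha, hS0]
    funext i
    simp only [Pi.smul_apply, Pi.add_apply, smul_eq_mul, Pi.zero_apply]
    ring
  -- every multiple of S z is the image of a multiple of z
  have hmulbwd : ∀ (z : Fin n → Ω →ₘ[P] ℝ), z ≠ 0 → ∀ t : Ω →ₘ[P] ℝ,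
      ∃ κ : Ω →ₘ[P] ℝ, S (κ • z) = t • S z := by
    intro z hz t
    have hmem : t • S z ∈ {w | ∃ lam : Ω →ₘ[P] ℝ,
        w = lam • S z + (1 - lam) • S (0 : Fin n → Ω →ₘ[P] ℝ)} := by
      refine ⟨t, ?_⟩
      rw [hS0]
      funext i
      simp only [Pi.smul_apply, Pi.add_apply, smul_eq_mul, Pi.zero_apply]
      ring
    rw [← hline z 0 hz] at hmem
    obtain ⟨u, ⟨κ, hκ⟩, hSu⟩ := hmem
    refine ⟨κ, ?_⟩
    have hu : u = κ • z := by
      rw [hκ]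
      funext i
      simp only [Pi.smul_apply, Pi.add_apply, smul_eq_mul, Pi.zero_apply]
      ring
    rw [← hu, hSu]
  -- the line through z parallel to w maps into the line through S z and S (z + w)
  have hpar : ∀ (z w : Fin n → Ω →ₘ[P] ℝ), z ≠ z + w → ∀ t : Ω →ₘ[P] ℝ,
      ∃ ν : Ω →ₘ[P] ℝ, S (z + ν • w) = t • S z + (1 - t) • S (z + w) := by
    intro z w hzw t
    have hmem : t • S z + (1 - t) • S (z + w) ∈
        {v | ∃ lam : Ω →ₘ[P] ℝ, v = lam • S z + (1 - lam) • S (z + w)} := ⟨t, rfl⟩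
    rw [← hline z (z + w) hzw] at hmem
    obtain ⟨u, ⟨s, hs⟩, hSu⟩ := hmem
    refine ⟨1 - s, ?_⟩
    have hu : u = z + (1 - s) • w := by
      rw [hs]
      funext i
      simp only [Pi.smul_apply, Pi.add_apply, smul_eq_mul]
      ring
    rw [← hu, hSu]
  have hc2xy : ((1 : Ω →ₘ[P] ℝ) + 1) • x ≠ ((1 : Ω →ₘ[P] ℝ) + 1) • y := by
    intro h
    apply h2ne
    refine (hind (1 + 1) (-(1 + 1)) ?_).1
    funext i
    have h2 := congrFun h i
    simp only [Pi.smul_apply, smul_eq_mul] at h2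
    simp only [Pi.smul_apply, Pi.add_apply, smul_eq_mul, Pi.zero_apply]
    linear_combination h2
  obtain ⟨a, ha⟩ := hmulfwd x hx0 (1 + 1)
  obtain ⟨b, hb⟩ := hmulfwd y hy0 (1 + 1)
  have hmem : x + y ∈ {w | ∃ lam : Ω →ₘ[P] ℝ,
      w = lam • (((1 : Ω →ₘ[P] ℝ) + 1) • x) + (1 - lam) • (((1 : Ω →ₘ[P] ℝ) + 1) • y)} := by
    refine ⟨WuLongAux.half P, ?_⟩
    have h1 := WuLongAux.half_mul_two (P := P)
    funext i
    simp only [Pi.smul_apply, Pi.add_apply, smul_eq_mul]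
    linear_combination (y i - x i) * h1
  have hmem2 := Set.mem_image_of_mem S hmem
  rw [hline _ _ hc2xy] at hmem2
  obtain ⟨t, ht⟩ := hmem2
  have hrep : S (x + y) = (t * a) • S x + ((1 - t) * b) • S y := by
    rw [ht, ha, hb]
    funext i
    simp only [Pi.smul_apply, Pi.add_apply, smul_eq_mul]
    ring
  have hA1 : t * a = 1 :=
    WuLongAux.alpha_eq_one S hinj hSind x y hind (t * a) ((1 - t) * b) hrep
      (hpar x y hxxy) (hmulbwd y hy0)
  have hrep' : S (y + x) = ((1 - t) * b) • S y + (t * a) • S x := by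
    rw [add_comm y x, hrep]
    funext i
    simp only [Pi.smul_apply, Pi.add_apply, smul_eq_mul]
    ring
  have hB1 : (1 - t) * b = 1 :=
    WuLongAux.alpha_eq_one S hinj hSind y x hind' ((1 - t) * b) (t * a) hrep'
      (hpar y x hyyx) (hmulbwd x hx0)
  rw [hrep, hA1, hB1]
  funext i
  simp only [Pi.smul_apply, Pi.add_apply, smul_eq_mul, one_mul]
end
end

section
/- Let n ≥ 2 be an integer and S : (L^0)^n → (L^0)^n an injective map with the local property satisfying S(θ) = θ which maps each L^0-line onto an L^0-line. Then for any ξ ∈ L^0 with ξ ≠ 0 almost everywhere on Ω, there exists a unique f(ξ) ∈ L^0 such that S(ξx) = f(ξ)S(x) for every x ∈ (L^0)^n having full support. -/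
/-!
Statements from "The fundamental theorem of affine geometry in `(L⁰)ⁿ`" (Wu–Long).

`L⁰`, the algebra of equivalence classes (under `P`-a.e. equality) of real valued
random variables on a probability space `(Ω, F, P)`, is modeled as `Ω →ₘ[P] ℝ`,
and `(L⁰)ⁿ` as `Fin n → (Ω →ₘ[P] ℝ)` with the pointwise `L⁰`-module structure.
-/

open MeasureTheory

noncomputable section

variable {Ω : Type*} [MeasurableSpace Ω] {P : Measure Ω}

namespace WuLong

lemma l0_eq_iff {f g : Ω →ₘ[P] ℝ} : f = g ↔ ⇑f =ᵐ[P] ⇑g :=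
  ⟨fun h => h ▸ Filter.EventuallyEq.rfl, AEEqFun.ext⟩

lemma coeFn_ind {A : Set Ω} (hA : MeasurableSet A) :
    ⇑(ind P hA) =ᵐ[P] A.indicator (fun _ => (1:ℝ)) := AEEqFun.coeFn_mk _ _

/-- a measurable representative -/
lemma exists_rep (f : Ω →ₘ[P] ℝ) : ∃ g : Ω → ℝ, Measurable g ∧ ⇑f =ᵐ[P] g := by
  have h := f.aestronglyMeasurable.aemeasurable
  exact ⟨h.mk f, h.measurable_mk, h.ae_eq_mk⟩

lemma ind_mul_ae {A : Set Ω} (hA : MeasurableSet A) (f : Ω →ₘ[P] ℝ) :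
    ⇑(ind P hA * f) =ᵐ[P] fun ω => A.indicator (fun _ => (1:ℝ)) ω * f ω := by
  filter_upwards [AEEqFun.coeFn_mul (ind P hA) f, coeFn_ind (P:=P) hA] with ω h1 h2
  rw [h1, Pi.mul_apply, h2]

lemma ind_mul_eq_zero_iff {A : Set Ω} (hA : MeasurableSet A) (f : Ω →ₘ[P] ℝ) :
    ind P hA * f = 0 ↔ ∀ᵐ ω ∂P, ω ∈ A → f ω = 0 := by
  rw [l0_eq_iff]
  constructor
  · intro h
    filter_upwards [h, ind_mul_ae hA f, AEEqFun.coeFn_zero (β := ℝ) (μ := P)] with ω h1 h2 h3 hmem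
    rw [h2, h3] at h1
    simpa [Set.indicator_of_mem hmem] using h1
  · intro h
    filter_upwards [h, ind_mul_ae hA f, AEEqFun.coeFn_zero (β := ℝ) (μ := P)] with ω h1 h2 h3
    rw [h2, h3]
    by_cases hm : ω ∈ A
    · simp [Set.indicator_of_mem hm, h1 hm]
    · simp [Set.indicator_of_notMem hm]

lemma smul_apply {n : ℕ} (c : Ω →ₘ[P] ℝ) (x : Fin n → Ω →ₘ[P] ℝ) (i : Fin n) :
    (c • x) i = c * x i := rfl

lemma ind_smul_eq_zero_iff {n : ℕ} {A : Set Ω} (hA : MeasurableSet A)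
    (x : Fin n → Ω →ₘ[P] ℝ) :
    ind P hA • x = 0 ↔ ∀ᵐ ω ∂P, ω ∈ A → ∀ i, x i ω = 0 := by
  rw [funext_iff]
  simp only [smul_apply, Pi.zero_apply, ind_mul_eq_zero_iff hA]
  rw [← ae_all_iff]
  constructor
  · intro h; filter_upwards [h] with ω h hm i; exact h i hm
  · intro h; filter_upwards [h] with ω h i hm; exact h hm i

lemma ind_add_compl {A : Set Ω} (hA : MeasurableSet A) :
    ind P hA + ind P hA.compl = 1 := by
  rw [l0_eq_iff]
  filter_upwards [AEEqFun.coeFn_add (ind P hA) (ind P hA.compl), coeFn_ind (P:=P) hA,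
    coeFn_ind (P:=P) hA.compl, AEEqFun.coeFn_one (β := ℝ) (μ := P)] with ω h1 h2 h3 h4
  rw [h1]; simp only [Pi.add_apply, h2, h3, h4]
  by_cases h : ω ∈ A <;>
    simp [Set.indicator_of_mem, Set.indicator_of_notMem, h]

lemma ind_mul_compl {A : Set Ω} (hA : MeasurableSet A) :
    ind P hA.compl * ind P hA = 0 := by
  rw [ind_mul_eq_zero_iff]
  filter_upwards [coeFn_ind (P:=P) hA] with ω h2 hmem
  rw [h2, Set.indicator_of_notMem (by simpa using hmem)]

lemma smul_decomp {n : ℕ} {A : Set Ω} (hA : MeasurableSet A) (v : Fin n → Ω →ₘ[P] ℝ) :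
    v = ind P hA • v + ind P hA.compl • v := by
  rw [← add_smul, ind_add_compl, one_smul]


/-- Full support. -/
def FullSupp {n : ℕ} (P : Measure Ω) (x : Fin n → Ω →ₘ[P] ℝ) : Prop :=
  ∀ (A : Set Ω) (hA : MeasurableSet A), ind P hA • x = 0 → P A = 0

lemma measure_eq_zero_of_ae_nmem {A : Set Ω} (h : ∀ᵐ ω ∂P, ω ∉ A) : P A = 0 :=
  measure_eq_zero_iff_ae_notMem.2 h

lemma fullSupp_of_ae {n : ℕ} {x : Fin n → Ω →ₘ[P] ℝ}
    (h : ∀ᵐ ω ∂P, ¬ ∀ i, x i ω = 0) : FullSupp P x := by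
  intro A hA hx
  rw [ind_smul_eq_zero_iff hA] at hx
  apply measure_eq_zero_of_ae_nmem
  filter_upwards [h, hx] with ω h1 h2 hmem
  exact h1 (h2 hmem)

section Smap

variable {n : ℕ} {S : (Fin n → Ω →ₘ[P] ℝ) → (Fin n → Ω →ₘ[P] ℝ)}

/-- S commutes with multiplication by indicators. -/
lemma S_ind (hinj : Function.Injective S)
    (hloc : ∀ (x : Fin n → Ω →ₘ[P] ℝ) (A : Set Ω) (hA : MeasurableSet A),
        ind P hA • S (ind P hA • x) = ind P hA • S x)
    (hS0 : S 0 = 0) (x : Fin n → Ω →ₘ[P] ℝ) {A : Set Ω} (hA : MeasurableSet A) :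
    S (ind P hA • x) = ind P hA • S x := by
  have h1 := hloc x A hA
  have h2 := hloc (ind P hA • x) Aᶜ hA.compl
  have h3 : ind P hA.compl • ind P hA • x = 0 := by
    rw [smul_smul, ind_mul_compl hA, zero_smul]
  rw [h3, hS0, smul_zero] at h2
  calc S (ind P hA • x)
      = ind P hA • S (ind P hA • x) + ind P hA.compl • S (ind P hA • x) :=
        smul_decomp hA _
    _ = ind P hA • S x := by rw [h1, ← h2, add_zero]

lemma ind_smul_S_zero_iff (hinj : Function.Injective S)
    (hloc : ∀ (x : Fin n → Ω →ₘ[P] ℝ) (A : Set Ω) (hA : MeasurableSet A),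
        ind P hA • S (ind P hA • x) = ind P hA • S x)
    (hS0 : S 0 = 0) (x : Fin n → Ω →ₘ[P] ℝ) {A : Set Ω} (hA : MeasurableSet A) :
    ind P hA • S x = 0 ↔ ind P hA • x = 0 := by
  rw [← S_ind hinj hloc hS0 x hA]
  constructor
  · intro h
    apply hinj
    rw [h, hS0]
  · intro h
    rw [h, hS0]

lemma fullSupp_S (hinj : Function.Injective S)
    (hloc : ∀ (x : Fin n → Ω →ₘ[P] ℝ) (A : Set Ω) (hA : MeasurableSet A),
        ind P hA • S (ind P hA • x) = ind P hA • S x)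
    (hS0 : S 0 = 0) {x : Fin n → Ω →ₘ[P] ℝ} (hx : FullSupp P x) : FullSupp P (S x) := by
  intro A hA h
  exact hx A hA ((ind_smul_S_zero_iff hinj hloc hS0 x hA).1 h)

end Smap

/-- cancellation against a full-support vector -/
lemma fullSupp_cancel {n : ℕ} {v : Fin n → Ω →ₘ[P] ℝ} (hv : FullSupp P v)
    {c c' : Ω →ₘ[P] ℝ} (h : c • v = c' • v) : c = c' := by
  obtain ⟨cm, hcm, hc⟩ := exists_rep c
  obtain ⟨c'm, hc'm, hc'⟩ := exists_rep c'
  set D : Set Ω := {ω | cm ω ≠ c'm ω} with hD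
  have hDm : MeasurableSet D := (measurableSet_eq_fun hcm hc'm).compl
  have hzero : ind P hDm • v = 0 := by
    rw [ind_smul_eq_zero_iff]
    have h' : ∀ i, ∀ᵐ ω ∂P, c ω * v i ω = c' ω * v i ω := by
      intro i
      have := congrFun h i
      rw [smul_apply, smul_apply, l0_eq_iff] at this
      filter_upwards [this, AEEqFun.coeFn_mul c (v i), AEEqFun.coeFn_mul c' (v i)]
        with ω h1 h2 h3
      simp only [Pi.mul_apply] at h2 h3
      rw [← h2, ← h3, h1]
    have h'' := ae_all_iff.2 h'
    filter_upwards [h'', hc, hc'] with ω hall h2 h3 hmem i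
    have h1 := hall i
    have hne : c ω ≠ c' ω := by rw [h2, h3]; exact hmem
    have : (c ω - c' ω) * v i ω = 0 := by ring_nf; linarith [h1]
    rcases mul_eq_zero.1 this with h | h
    · exact absurd (by linarith) hne
    · exact h
  have hD0 : P D = 0 := hv D hDm hzero
  rw [l0_eq_iff]
  have : ∀ᵐ ω ∂P, ω ∉ D := measure_eq_zero_iff_ae_notMem.1 hD0
  filter_upwards [this, hc, hc'] with ω h1 h2 h3
  rw [h2, h3]
  simpa [hD, not_not] using h1


lemma ind_mul_eq_iff {A : Set Ω} (hA : MeasurableSet A) (f g : Ω →ₘ[P] ℝ) :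
    ind P hA * f = ind P hA * g ↔ ∀ᵐ ω ∂P, ω ∈ A → f ω = g ω := by
  rw [l0_eq_iff]
  constructor
  · intro h
    filter_upwards [h, ind_mul_ae hA f, ind_mul_ae hA g] with ω h1 h2 h3 hmem
    rw [h2, h3] at h1
    simpa [Set.indicator_of_mem hmem] using h1
  · intro h
    filter_upwards [h, ind_mul_ae hA f, ind_mul_ae hA g] with ω h1 h2 h3
    rw [h2, h3]
    by_cases hm : ω ∈ A
    · simp [Set.indicator_of_mem hm, h1 hm]
    · simp [Set.indicator_of_notMem hm]

section Smap2

variable {n : ℕ} {S : (Fin n → Ω →ₘ[P] ℝ) → (Fin n → Ω →ₘ[P] ℝ)}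

lemma exists_scalar (hS0 : S 0 = 0)
    (hline : ∀ x y : Fin n → Ω →ₘ[P] ℝ, x ≠ y →
        S '' {z | ∃ lam : Ω →ₘ[P] ℝ, z = lam • x + (1 - lam) • y}
          = {z | ∃ lam : Ω →ₘ[P] ℝ, z = lam • S x + (1 - lam) • S y})
    {x : Fin n → Ω →ₘ[P] ℝ} (hx : x ≠ 0) (η : Ω →ₘ[P] ℝ) :
    ∃ c : Ω →ₘ[P] ℝ, S (η • x) = c • S x := by
  have h := hline x 0 hx
  have hmem : η • x ∈ {z | ∃ lam : Ω →ₘ[P] ℝ, z = lam • x + (1 - lam) • (0 : Fin n → Ω →ₘ[P] ℝ)} :=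
    ⟨η, by rw [smul_zero, add_zero]⟩
  have himg : S (η • x) ∈ S '' _ := Set.mem_image_of_mem S hmem
  rw [h] at himg
  obtain ⟨c, hc⟩ := himg
  exact ⟨c, by rw [hc, hS0, smul_zero, add_zero]⟩

lemma scalar_local (hinj : Function.Injective S)
    (hloc : ∀ (x : Fin n → Ω →ₘ[P] ℝ) (A : Set Ω) (hA : MeasurableSet A),
        ind P hA • S (ind P hA • x) = ind P hA • S x)
    (hS0 : S 0 = 0) {x : Fin n → Ω →ₘ[P] ℝ} (hSx : FullSupp P (S x))
    {A : Set Ω} (hA : MeasurableSet A) {η η' c c' : Ω →ₘ[P] ℝ}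
    (hηη : ind P hA * η = ind P hA * η')
    (hc : S (η • x) = c • S x) (hc' : S (η' • x) = c' • S x) :
    ind P hA * c = ind P hA * c' := by
  apply fullSupp_cancel hSx
  calc (ind P hA * c) • S x = ind P hA • (c • S x) := by rw [smul_smul]
    _ = ind P hA • S (η • x) := by rw [hc]
    _ = S (ind P hA • η • x) := (S_ind hinj hloc hS0 _ hA).symm
    _ = S ((ind P hA * η) • x) := by rw [smul_smul]
    _ = S ((ind P hA * η') • x) := by rw [hηη]
    _ = S (ind P hA • η' • x) := by rw [smul_smul]
    _ = ind P hA • S (η' • x) := S_ind hinj hloc hS0 _ hA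
    _ = (ind P hA * c') • S x := by rw [hc', smul_smul]

lemma scalar_one (hinj : Function.Injective S)
    (hloc : ∀ (x : Fin n → Ω →ₘ[P] ℝ) (A : Set Ω) (hA : MeasurableSet A),
        ind P hA • S (ind P hA • x) = ind P hA • S x)
    (hS0 : S 0 = 0) {x : Fin n → Ω →ₘ[P] ℝ} (hSx : FullSupp P (S x))
    {B : Set Ω} (hB : MeasurableSet B) {η c : Ω →ₘ[P] ℝ}
    (hη1 : ∀ᵐ ω ∂P, ω ∈ B → η ω = 1)
    (hc : S (η • x) = c • S x) :
    ∀ᵐ ω ∂P, ω ∈ B → c ω = 1 := by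
  have h1 : ind P hB * η = ind P hB * 1 := by
    rw [ind_mul_eq_iff]
    filter_upwards [hη1, AEEqFun.coeFn_one (β := ℝ) (μ := P)] with ω h1 h2 hmem
    rw [h1 hmem, h2]; rfl
  have hone : S ((1 : Ω →ₘ[P] ℝ) • x) = (1 : Ω →ₘ[P] ℝ) • S x := by
    rw [one_smul, one_smul]
  have := scalar_local hinj hloc hS0 hSx hB h1 hc hone
  rw [ind_mul_eq_iff] at this
  filter_upwards [this, AEEqFun.coeFn_one (β := ℝ) (μ := P)] with ω h1 h2 hmem
  rw [h1 hmem, h2]; rfl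

end Smap2

/-- a.e. pointwise linear independence of a pair of vectors -/
def AEIndep {n : ℕ} (P : Measure Ω) (x y : Fin n → Ω →ₘ[P] ℝ) : Prop :=
  ∀ᵐ ω ∂P, ∀ a b : ℝ, (∀ i, a * x i ω + b * y i ω = 0) → a = 0 ∧ b = 0

lemma AEIndep.symm {n : ℕ} {x y : Fin n → Ω →ₘ[P] ℝ} (h : AEIndep P x y) :
    AEIndep P y x := by
  filter_upwards [h] with ω hω a b hab
  have := hω b a (fun i => by linarith [hab i])
  exact ⟨this.2, this.1⟩

lemma AEIndep.local {n : ℕ} {x y : Fin n → Ω →ₘ[P] ℝ} (hxy : AEIndep P x y)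
    {A : Set Ω} (hA : MeasurableSet A) {α β : Ω →ₘ[P] ℝ}
    (h : ind P hA • (α • x + β • y) = 0) :
    ind P hA * α = 0 ∧ ind P hA * β = 0 := by
  rw [ind_smul_eq_zero_iff] at h
  have hcoe : ∀ i, ∀ᵐ ω ∂P, (α • x + β • y) i ω = α ω * x i ω + β ω * y i ω := by
    intro i
    have hrfl : (α • x + β • y) i = α * x i + β * y i := rfl
    rw [hrfl]
    filter_upwards [AEEqFun.coeFn_add (α * x i) (β * y i), AEEqFun.coeFn_mul α (x i),
      AEEqFun.coeFn_mul β (y i)] with ω h1 h2 h3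
    rw [h1, Pi.add_apply, h2, h3, Pi.mul_apply, Pi.mul_apply]
  have key : ∀ᵐ ω ∂P, ω ∈ A → α ω = 0 ∧ β ω = 0 := by
    filter_upwards [ae_all_iff.2 hcoe, h, hxy] with ω h1 h2 h3 hmem
    exact h3 (α ω) (β ω) (fun i => by rw [← h1 i]; exact h2 hmem i)
  constructor <;> rw [ind_mul_eq_zero_iff] <;>
    [skip; skip] <;> filter_upwards [key] with ω h1 hmem
  · exact (h1 hmem).1
  · exact (h1 hmem).2

lemma AEIndep.ne [IsProbabilityMeasure P] {n : ℕ} {x y : Fin n → Ω →ₘ[P] ℝ}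
    (hxy : AEIndep P x y) : x ≠ y := by
  intro h
  subst h
  haveI : (ae P).NeBot := ae_neBot.2 (IsProbabilityMeasure.ne_zero P)
  obtain ⟨ω, hω⟩ := hxy.exists
  have := hω 1 (-1) (fun i => by ring)
  exact one_ne_zero this.1

lemma AEIndep.smul_ne [IsProbabilityMeasure P] {n : ℕ} {x y : Fin n → Ω →ₘ[P] ℝ}
    (hxy : AEIndep P x y) {ξ : Ω →ₘ[P] ℝ} (hξ : ∀ᵐ ω ∂P, ξ ω ≠ 0) :
    ξ • x ≠ ξ • y := by
  intro h
  haveI : (ae P).NeBot := ae_neBot.2 (IsProbabilityMeasure.ne_zero P)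
  have hae : ∀ i, ∀ᵐ ω ∂P, ξ ω * x i ω = ξ ω * y i ω := by
    intro i
    have := congrFun h i
    rw [smul_apply, smul_apply, l0_eq_iff] at this
    filter_upwards [this, AEEqFun.coeFn_mul ξ (x i), AEEqFun.coeFn_mul ξ (y i)]
      with ω h1 h2 h3
    simp only [Pi.mul_apply] at h2 h3
    rw [← h2, ← h3, h1]
  have : ∀ᵐ ω ∂P, False := by
    filter_upwards [ae_all_iff.2 hae, hxy, hξ] with ω h1 h2 h3
    have heq : ∀ i, x i ω = y i ω := fun i => mul_left_cancel₀ h3 (h1 i)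
    have := h2 1 (-1) (fun i => by rw [heq i]; ring)
    exact one_ne_zero this.1
  obtain ⟨ω, hω⟩ := this.exists
  exact hω


section Core

variable {n : ℕ} {S : (Fin n → Ω →ₘ[P] ℝ) → (Fin n → Ω →ₘ[P] ℝ)}

/-- Core step: for an a.e.-independent pair and `ξ` a.e. different from `0` and `1`,
the two scalars agree. -/
lemma core [IsProbabilityMeasure P] (hinj : Function.Injective S)
    (hloc : ∀ (x : Fin n → Ω →ₘ[P] ℝ) (A : Set Ω) (hA : MeasurableSet A),
        ind P hA • S (ind P hA • x) = ind P hA • S x)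
    (hS0 : S 0 = 0)
    (hline : ∀ x y : Fin n → Ω →ₘ[P] ℝ, x ≠ y →
        S '' {z | ∃ lam : Ω →ₘ[P] ℝ, z = lam • x + (1 - lam) • y}
          = {z | ∃ lam : Ω →ₘ[P] ℝ, z = lam • S x + (1 - lam) • S y})
    {x y : Fin n → Ω →ₘ[P] ℝ} (hxy : AEIndep P x y)
    {ξ g h : Ω →ₘ[P] ℝ}
    (hξ0 : ∀ᵐ ω ∂P, ξ ω ≠ 0) (hξ1 : ∀ᵐ ω ∂P, ξ ω ≠ 1)
    (hg : S (ξ • x) = g • S x) (hh : S (ξ • y) = h • S y) : g = h := by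
  obtain ⟨gm, hgm, hgc⟩ := exists_rep g
  obtain ⟨hm, hhm, hhc⟩ := exists_rep h
  set D : Set Ω := {ω | gm ω ≠ hm ω} with hDdef
  have hDm : MeasurableSet D := (measurableSet_eq_fun hgm hhm).compl
  -- the solving scalar
  set μ0 : Ω → ℝ := fun ω => (1 - hm ω) * (gm ω - hm ω)⁻¹ with hμ0def
  have hμ0m : Measurable μ0 := ((measurable_const.sub hhm).mul (hgm.sub hhm).inv)
  set μ : Ω →ₘ[P] ℝ := AEEqFun.mk μ0 hμ0m.aestronglyMeasurable with hμdef
  have hμc : ⇑μ =ᵐ[P] μ0 := AEEqFun.coeFn_mk _ _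
  have hne : x ≠ y := hxy.ne
  have hξne : ξ • x ≠ ξ • y := hxy.smul_ne hξ0
  -- points on the two image lines, pulled back
  have hz₁ : (μ * g) • S x + (1 - μ * g) • S y ∈
      {z | ∃ lam : Ω →ₘ[P] ℝ, z = lam • S x + (1 - lam) • S y} := ⟨μ * g, rfl⟩
  rw [← hline x y hne] at hz₁
  obtain ⟨p, ⟨l₀, hp⟩, hSp⟩ := hz₁
  have hz₂ : μ • S (ξ • x) + (1 - μ) • S (ξ • y) ∈
      {z | ∃ lam : Ω →ₘ[P] ℝ, z = lam • S (ξ • x) + (1 - lam) • S (ξ • y)} := ⟨μ, rfl⟩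
  rw [← hline (ξ • x) (ξ • y) hξne] at hz₂
  obtain ⟨q, ⟨m₀, hq⟩, hSq⟩ := hz₂
  -- the coefficient identity on D
  have hcoef : ind P hDm * ((1 - μ * g) - (1 - μ) * h) = 0 := by
    rw [ind_mul_eq_zero_iff]
    have hc1 : ⇑((1 - μ * g) - (1 - μ) * h) =ᵐ[P]
        fun ω => (1 - μ ω * g ω) - (1 - μ ω) * h ω := by
      filter_upwards [AEEqFun.coeFn_sub (1 - μ * g) ((1 - μ) * h),
        AEEqFun.coeFn_sub (1 : Ω →ₘ[P] ℝ) (μ * g),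
        AEEqFun.coeFn_mul (1 - μ) h, AEEqFun.coeFn_mul μ g,
        AEEqFun.coeFn_sub (1 : Ω →ₘ[P] ℝ) μ,
        AEEqFun.coeFn_one (β := ℝ) (μ := P)] with ω e1 e2 e3 e4 e5 e6
      rw [e1, Pi.sub_apply, e2, e3, Pi.sub_apply, Pi.mul_apply, e4, Pi.mul_apply, e5,
        Pi.sub_apply, e6, Pi.one_apply]
    filter_upwards [hc1, hμc, hgc, hhc] with ω e1 e2 e3 e4 hmem
    rw [e1, e2, e3, e4]
    have hne' : gm ω - hm ω ≠ 0 := sub_ne_zero.2 hmem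
    rw [hμ0def]
    field_simp
    ring
  -- the two pulled-back points agree on D
  have hC1 : ind P hDm • S p = ind P hDm • S q := by
    rw [hSp, hSq, hg, hh]
    funext i
    show ind P hDm * ((μ * g) * S x i + (1 - μ * g) * S y i)
        = ind P hDm * (μ * (g * S x i) + (1 - μ) * (h * S y i))
    linear_combination (S y i) * hcoef
  have hpq : ind P hDm • p = ind P hDm • q := by
    apply hinj
    rw [S_ind hinj hloc hS0 _ hDm, S_ind hinj hloc hS0 _ hDm, hC1]
  -- extract coefficients
  have hdiff : ind P hDm • ((l₀ - m₀ * ξ) • x + ((1 - l₀) - (1 - m₀) * ξ) • y) = 0 := by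
    have : (l₀ - m₀ * ξ) • x + ((1 - l₀) - (1 - m₀) * ξ) • y = p - q := by
      rw [hp, hq]
      funext i
      show (l₀ - m₀ * ξ) * x i + ((1 - l₀) - (1 - m₀) * ξ) * y i
          = (l₀ * x i + (1 - l₀) * y i) - (m₀ * (ξ * x i) + (1 - m₀) * (ξ * y i))
      ring
    rw [this, smul_sub, hpq, sub_self]
  obtain ⟨ha, hb⟩ := hxy.local hDm hdiff
  have hsum : ind P hDm * (1 - ξ) = 0 := by linear_combination ha + hb
  -- conclude D is null
  rw [ind_mul_eq_zero_iff] at hsum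
  have hD0 : P D = 0 := by
    apply measure_eq_zero_of_ae_nmem
    filter_upwards [hsum, hξ1, AEEqFun.coeFn_sub (1 : Ω →ₘ[P] ℝ) ξ,
      AEEqFun.coeFn_one (β := ℝ) (μ := P)] with ω e1 e2 e3 e4 hmem
    have := e1 hmem
    rw [e3, Pi.sub_apply, e4, Pi.one_apply] at this
    exact e2 (by linarith)
  rw [l0_eq_iff]
  filter_upwards [measure_eq_zero_iff_ae_notMem.1 hD0, hgc, hhc] with ω e1 e2 e3
  rw [e2, e3]
  simpa [hDdef, not_not] using e1


lemma fullSupp_ne_zero [IsProbabilityMeasure P] {x : Fin n → Ω →ₘ[P] ℝ}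
    (hx : FullSupp P x) : x ≠ 0 := by
  intro h
  have := hx Set.univ MeasurableSet.univ (by rw [h, smul_zero])
  simp [measure_univ] at this

/-- Scalars agree for an a.e.-independent pair, for any a.e.-invertible `ξ`. -/
lemma pair_eq [IsProbabilityMeasure P] (hinj : Function.Injective S)
    (hloc : ∀ (x : Fin n → Ω →ₘ[P] ℝ) (A : Set Ω) (hA : MeasurableSet A),
        ind P hA • S (ind P hA • x) = ind P hA • S x)
    (hS0 : S 0 = 0)
    (hline : ∀ x y : Fin n → Ω →ₘ[P] ℝ, x ≠ y →
        S '' {z | ∃ lam : Ω →ₘ[P] ℝ, z = lam • x + (1 - lam) • y}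
          = {z | ∃ lam : Ω →ₘ[P] ℝ, z = lam • S x + (1 - lam) • S y})
    {x y : Fin n → Ω →ₘ[P] ℝ} (hx : FullSupp P x) (hy : FullSupp P y)
    (hxy : AEIndep P x y) {ξ g h : Ω →ₘ[P] ℝ}
    (hξ : ∀ᵐ ω ∂P, ξ ω ≠ 0)
    (hg : S (ξ • x) = g • S x) (hh : S (ξ • y) = h • S y) : g = h := by
  classical
  obtain ⟨ξm, hξm, hξc⟩ := exists_rep ξ
  set B : Set Ω := {ω | ξm ω = 1} with hBdef
  have hBm : MeasurableSet B := measurableSet_eq_fun hξm measurable_const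
  set ξ'0 : Ω → ℝ := fun ω => if ξm ω = 1 then 2 else ξm ω with hξ'0def
  have hξ'0m : Measurable ξ'0 := Measurable.ite hBm measurable_const hξm
  set ξ' : Ω →ₘ[P] ℝ := AEEqFun.mk ξ'0 hξ'0m.aestronglyMeasurable with hξ'def
  have hξ'c : ⇑ξ' =ᵐ[P] ξ'0 := AEEqFun.coeFn_mk _ _
  obtain ⟨g', hg'⟩ := exists_scalar hS0 hline (fullSupp_ne_zero hx) ξ'
  obtain ⟨h', hh'⟩ := exists_scalar hS0 hline (fullSupp_ne_zero hy) ξ'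
  have hξ'ne0 : ∀ᵐ ω ∂P, ξ' ω ≠ 0 := by
    filter_upwards [hξ'c, hξc, hξ] with ω e1 e2 e3
    rw [e1, hξ'0def]
    by_cases hc : ξm ω = 1
    · simp [hc]
    · simp only []; rw [if_neg hc, ← e2]; exact e3
  have hξ'ne1 : ∀ᵐ ω ∂P, ξ' ω ≠ 1 := by
    filter_upwards [hξ'c] with ω e1
    rw [e1, hξ'0def]
    by_cases hc : ξm ω = 1
    · norm_num [hc]
    · simp only []; rw [if_neg hc]; exact hc
  have hg'h' : g' = h' := core hinj hloc hS0 hline hxy hξ'ne0 hξ'ne1 hg' hh'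
  have hSx : FullSupp P (S x) := fullSupp_S hinj hloc hS0 hx
  have hSy : FullSupp P (S y) := fullSupp_S hinj hloc hS0 hy
  have hBc : ind P hBm.compl * ξ = ind P hBm.compl * ξ' := by
    rw [ind_mul_eq_iff]
    filter_upwards [hξc, hξ'c] with ω e1 e2 hmem
    have : ξm ω ≠ 1 := hmem
    rw [e1, e2, hξ'0def]
    simp only []
    rw [if_neg this]
  have e1 := scalar_local hinj hloc hS0 hSx hBm.compl hBc hg hg'
  have e2 := scalar_local hinj hloc hS0 hSy hBm.compl hBc hh hh'
  have hB1 : ∀ᵐ ω ∂P, ω ∈ B → ξ ω = 1 := by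
    filter_upwards [hξc] with ω e hmem
    rw [e]; exact hmem
  have sg := scalar_one hinj hloc hS0 hSx hBm hB1 hg
  have sh := scalar_one hinj hloc hS0 hSy hBm hB1 hh
  rw [ind_mul_eq_iff] at e1 e2
  rw [l0_eq_iff]
  have hg'h'c : ⇑g' =ᵐ[P] ⇑h' := l0_eq_iff.1 hg'h'
  filter_upwards [e1, e2, sg, sh, hg'h'c] with ω f1 f2 f3 f4 f5
  by_cases hc : ω ∈ B
  · rw [f3 hc, f4 hc]
  · rw [f1 (Set.mem_compl hc), f2 (Set.mem_compl hc), f5]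

end Core

section Dep

/-- componentwise proportionality relation on `ℝ`-vectors -/
def Dep {n : ℕ} (u v : Fin n → ℝ) : Prop := ∀ i j, u i * v j = u j * v i

lemma dep_trans {n : ℕ} {u v w : Fin n → ℝ} (hu : u ≠ 0) (huv : Dep u v)
    (huw : Dep u w) : Dep v w := by
  obtain ⟨i₀, h0⟩ := Function.ne_iff.1 hu
  have h0' : u i₀ ≠ 0 := h0
  have hv : ∀ j, v j = u j * (v i₀ / u i₀) := by
    intro j
    have := huv j i₀
    field_simp
    linarith
  have hw : ∀ j, w j = u j * (w i₀ / u i₀) := by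
    intro j
    have := huw j i₀
    field_simp
    linarith
  intro i j
  rw [hv i, hv j, hw i, hw j]
  ring

lemma not_dep_indep {n : ℕ} {u v : Fin n → ℝ} (h : ¬ Dep u v) :
    ∀ a b : ℝ, (∀ i, a * u i + b * v i = 0) → a = 0 ∧ b = 0 := by
  intro a b hab
  by_cases ha : a = 0
  · subst ha
    by_cases hb : b = 0
    · exact ⟨rfl, hb⟩
    · exfalso
      apply h
      intro i j
      have hi := hab i
      have hj := hab j
      have : v i = 0 := by
        have : b * v i = 0 := by linarith
        exact (mul_eq_zero.1 this).resolve_left hb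
      have hvj : v j = 0 := by
        have : b * v j = 0 := by linarith
        exact (mul_eq_zero.1 this).resolve_left hb
      rw [this, hvj]
      ring
  · exfalso
    apply h
    intro i j
    have hi : u i = -(b * v i) / a := by
      have := hab i
      field_simp
      linarith
    have hj : u j = -(b * v j) / a := by
      have := hab j
      field_simp
      linarith
    rw [hi, hj]
    ring

end Dep

section Connector

lemma ae_nonvanish [IsProbabilityMeasure P] {n : ℕ} {x : Fin n → Ω →ₘ[P] ℝ}
    (hx : FullSupp P x) {xm : Fin n → Ω → ℝ} (hxm : ∀ i, Measurable (xm i))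
    (hxc : ∀ i, ⇑(x i) =ᵐ[P] xm i) :
    ∀ᵐ ω ∂P, (fun i => xm i ω) ≠ 0 := by
  set N := ⋂ i, {ω | xm i ω = 0} with hNdef
  have hNm : MeasurableSet N :=
    MeasurableSet.iInter fun i => measurableSet_eq_fun (hxm i) measurable_const
  have hind : ind P hNm • x = 0 := by
    rw [ind_smul_eq_zero_iff]
    filter_upwards [ae_all_iff.2 hxc] with ω e hmem i
    rw [e i]
    exact Set.mem_iInter.1 hmem i
  have hN0 := hx N hNm hind
  filter_upwards [measure_eq_zero_iff_ae_notMem.1 hN0] with ω e hz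
  exact e (Set.mem_iInter.2 fun i => congrFun hz i)

lemma exists_connector [IsProbabilityMeasure P] {n : ℕ} (hn : 2 ≤ n)
    {x y : Fin n → Ω →ₘ[P] ℝ} (hx : FullSupp P x) (hy : FullSupp P y) :
    ∃ z : Fin n → Ω →ₘ[P] ℝ, FullSupp P z ∧ AEIndep P x z ∧ AEIndep P y z := by
  classical
  have h0n : 0 < n := by omega
  have h1n : 1 < n := by omega
  set i0 : Fin n := ⟨0, h0n⟩ with hi0
  set i1 : Fin n := ⟨1, h1n⟩ with hi1
  have hi01 : i0 ≠ i1 := by simp [hi0, hi1, Fin.ext_iff]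
  set v1 : Fin n → ℝ := fun i => if i = i0 then 1 else 0 with hv1
  set v2 : Fin n → ℝ := fun i => if i = i1 then 1 else 0 with hv2
  set v3 : Fin n → ℝ := fun i => v1 i + v2 i with hv3
  have ev11 : v1 i0 = 1 := by simp [hv1]
  have ev10 : v1 i1 = 0 := by simp [hv1, hi01.symm]
  have ev21 : v2 i1 = 1 := by simp [hv2]
  have ev20 : v2 i0 = 0 := by simp [hv2, hi01]
  have ev30 : v3 i0 = 1 := by simp [hv3, ev11, ev20]
  have ev31 : v3 i1 = 1 := by simp [hv3, ev10, ev21]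
  have h12 : ¬ Dep v1 v2 := by
    intro hd
    have := hd i0 i1
    rw [ev11, ev21, ev10, ev20] at this
    norm_num at this
  have h13 : ¬ Dep v1 v3 := by
    intro hd
    have := hd i0 i1
    rw [ev11, ev31, ev10, ev30] at this
    norm_num at this
  have h23 : ¬ Dep v2 v3 := by
    intro hd
    have := hd i1 i0
    rw [ev21, ev30, ev20, ev31] at this
    norm_num at this
  choose xm hxm hxc using fun i => exists_rep (x i)
  choose ym hym hyc using fun i => exists_rep (y i)
  have hX := ae_nonvanish hx hxm hxc
  have hY := ae_nonvanish hy hym hyc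
  have depMeas : ∀ (m : Fin n → Ω → ℝ), (∀ i, Measurable (m i)) → ∀ (v : Fin n → ℝ),
      MeasurableSet {ω | Dep (fun i => m i ω) v} := by
    intro m hm v
    have : {ω | Dep (fun i => m i ω) v}
        = ⋂ i, ⋂ j, {ω | m i ω * v j = m j ω * v i} := by
      ext ω
      simp [Dep, Set.mem_iInter]
    rw [this]
    exact MeasurableSet.iInter fun i => MeasurableSet.iInter fun j =>
      measurableSet_eq_fun ((hm i).mul_const _) ((hm j).mul_const _)
  set Dx1 := {ω | Dep (fun i => xm i ω) v1} with hDx1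
  set Dy1 := {ω | Dep (fun i => ym i ω) v1} with hDy1
  set Dx2 := {ω | Dep (fun i => xm i ω) v2} with hDx2
  set Dy2 := {ω | Dep (fun i => ym i ω) v2} with hDy2
  set C1 := (Dx1 ∪ Dy1)ᶜ with hC1
  set C2 := (Dx2 ∪ Dy2)ᶜ with hC2
  have hC1m : MeasurableSet C1 := ((depMeas xm hxm v1).union (depMeas ym hym v1)).compl
  have hC2m : MeasurableSet C2 := ((depMeas xm hxm v2).union (depMeas ym hym v2)).compl
  set zf : Fin n → Ω → ℝ :=
    fun i ω => if ω ∈ C1 then v1 i else if ω ∈ C2 then v2 i else v3 i with hzf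
  have hzfm : ∀ i, Measurable (zf i) := fun i =>
    Measurable.ite hC1m measurable_const (Measurable.ite hC2m measurable_const measurable_const)
  set z : Fin n → Ω →ₘ[P] ℝ := fun i => AEEqFun.mk (zf i) (hzfm i).aestronglyMeasurable with hz
  have hzc : ∀ i, ⇑(z i) =ᵐ[P] zf i := fun i => AEEqFun.coeFn_mk _ _
  have hZ : ∀ ω, (fun i => zf i ω) = if ω ∈ C1 then v1 else if ω ∈ C2 then v2 else v3 := by
    intro ω
    funext i
    simp only [hzf]
    split_ifs <;> rfl
  have hkey : ∀ᵐ ω ∂P, ¬ Dep (fun i => xm i ω) (fun i => zf i ω)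
      ∧ ¬ Dep (fun i => ym i ω) (fun i => zf i ω) := by
    filter_upwards [hX, hY] with ω hXω hYω
    rw [hZ ω]
    by_cases h1 : ω ∈ C1
    · rw [if_pos h1]
      have h1' : ¬ (ω ∈ Dx1 ∨ ω ∈ Dy1) := h1
      push_neg at h1'
      exact ⟨h1'.1, h1'.2⟩
    · rw [if_neg h1]
      have d1 : ω ∈ Dx1 ∨ ω ∈ Dy1 := by
        by_contra hcon
        exact h1 hcon
      by_cases h2 : ω ∈ C2
      · rw [if_pos h2]
        have h2' : ¬ (ω ∈ Dx2 ∨ ω ∈ Dy2) := h2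
        push_neg at h2'
        exact ⟨h2'.1, h2'.2⟩
      · rw [if_neg h2]
        have d2 : ω ∈ Dx2 ∨ ω ∈ Dy2 := by
          by_contra hcon
          exact h2 hcon
        constructor
        · intro hd
          rcases d1 with e | e
          · exact h13 (dep_trans hXω e hd)
          · rcases d2 with f | f
            · exact h23 (dep_trans hXω f hd)
            · exact h12 (dep_trans hYω e f)
        · intro hd
          rcases d1 with e | e
          · rcases d2 with f | f
            · exact h12 (dep_trans hXω e f)
            · exact h23 (dep_trans hYω f hd)
          · exact h13 (dep_trans hYω e hd)
  refine ⟨z, ?_, ?_, ?_⟩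
  · apply fullSupp_of_ae
    filter_upwards [ae_all_iff.2 hzc] with ω e hz0
    have hzf0 : ∀ i, zf i ω = 0 := fun i => by rw [← e i]; exact hz0 i
    have h0 := hzf0 i0
    have h1' := hzf0 i1
    simp only [hzf] at h0 h1'
    split_ifs at h0 h1' <;> first
      | (rw [ev11] at h0; norm_num at h0)
      | (rw [ev21] at h1'; norm_num at h1')
      | (rw [ev30] at h0; norm_num at h0)
  · filter_upwards [hkey, ae_all_iff.2 hxc, ae_all_iff.2 hzc] with ω hk ex ez a b hab
    exact not_dep_indep hk.1 a b (fun i => by rw [← ex i, ← ez i]; exact hab i)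
  · filter_upwards [hkey, ae_all_iff.2 hyc, ae_all_iff.2 hzc] with ω hk ey ez a b hab
    exact not_dep_indep hk.2 a b (fun i => by rw [← ey i, ← ez i]; exact hab i)

end Connector

end WuLong

open WuLong in
/-- Step 4 of the proof of Theorem 3.1: for `S` as in the fundamental
theorem and `ξ ∈ L⁰` with `ξ ≠ 0` a.e., there is a unique `f(ξ) ∈ L⁰` such that
`S (ξ • x) = f(ξ) • S x` for every `x` with full support. -/
theorem exists_unique_scalar
    [IsProbabilityMeasure P] (n : ℕ) (hn : 2 ≤ n)
    (S : (Fin n → Ω →ₘ[P] ℝ) → (Fin n → Ω →ₘ[P] ℝ))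
    (hinj : Function.Injective S)
    (hloc : ∀ (x : Fin n → Ω →ₘ[P] ℝ) (A : Set Ω) (hA : MeasurableSet A),
        ind P hA • S (ind P hA • x) = ind P hA • S x)
    (hS0 : S 0 = 0)
    (hline : ∀ x y : Fin n → Ω →ₘ[P] ℝ, x ≠ y →
        S '' {z | ∃ lam : Ω →ₘ[P] ℝ, z = lam • x + (1 - lam) • y}
          = {z | ∃ lam : Ω →ₘ[P] ℝ, z = lam • S x + (1 - lam) • S y})
    (ξ : Ω →ₘ[P] ℝ) (hξ : ∀ᵐ ω ∂P, ξ ω ≠ 0) :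
    ∃! c : Ω →ₘ[P] ℝ, ∀ x : Fin n → Ω →ₘ[P] ℝ,
      (∀ (A : Set Ω) (hA : MeasurableSet A), ind P hA • x = 0 → P A = 0) →
      S (ξ • x) = c • S x := by
  set x₀ : Fin n → Ω →ₘ[P] ℝ := fun _ => 1 with hx₀def
  have hx₀full : FullSupp P x₀ := by
    apply fullSupp_of_ae
    filter_upwards [AEEqFun.coeFn_one (β := ℝ) (μ := P)] with ω e h
    have := h ⟨0, by omega⟩
    rw [hx₀def] at this
    rw [e] at this
    norm_num at this
  obtain ⟨c, hc⟩ := exists_scalar hS0 hline (fullSupp_ne_zero hx₀full) ξ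
  refine ⟨c, ?_, ?_⟩
  · intro x hxfull
    obtain ⟨cx, hcx⟩ := exists_scalar hS0 hline (fullSupp_ne_zero hxfull) ξ
    obtain ⟨z, hzfull, hxz, hx₀z⟩ := exists_connector hn hxfull hx₀full
    obtain ⟨cz, hcz⟩ := exists_scalar hS0 hline (fullSupp_ne_zero hzfull) ξ
    have e1 : cx = cz := pair_eq hinj hloc hS0 hline hxfull hzfull hxz hξ hcx hcz
    have e2 : c = cz := pair_eq hinj hloc hS0 hline hx₀full hzfull hx₀z hξ hc hcz
    rw [hcx, e1, ← e2]
  · intro c' hc'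
    have h1 : c' • S x₀ = c • S x₀ := by
      rw [← hc' x₀ hx₀full, hc]
    exact fullSupp_cancel (fullSupp_S hinj hloc hS0 hx₀full) h1
end
end
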